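/- arXiv:2604.12226 — 3 statements merged into one kernel-verified Lean document; each statement's English description precedes it below -/
import Mathlib

section
/- For every integer N ≥ 1 the following explicit bounds hold: H(η(N); 0) = H(η(N); 1) = 1; if s ≥ 1 then 0 < H(η(N); s) < 2^{s+1} − 1; if 0 < s < 1 then 0 < H(η(N); s) < (2^{s+1} − 1)/(2^s − 1); if −1 < s < 0 then 0 < H(η(N); s) < 2^{s+1}/(2^{s+1} − 1). Moreover |K(η(N))| ≤ 5 log 4 and |R(η(N))| ≤ 6 log 2. In particular, for each fixed s > −1 the sequences (H(η(N); s))_{N≥1}, (K(η(N)))_{N≥1}, and (R(η(N)))_{N≥1} are bounded. -/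
open Filter Topology

noncomputable section

namespace GreedyEnergy

/-- Decreasing list `n₁ > n₂ > ⋯ > n_p` of the binary exponents of `N`,
so that `N = 2^{n₁} + ⋯ + 2^{n_p}` with `n₁ > n₂ > ⋯ > n_p ≥ 0`. -/
def binExps (N : ℕ) : List ℕ :=
  ((List.range (N + 1)).filter fun i => N.testBit i).reverse

/-- The number `p = τ_b(N)` of ones in the binary expansion of `N`. -/
def pbin (N : ℕ) : ℕ := (binExps N).length

/-- `η(N)` viewed as an infinite sequence (0-indexed): the entry of index `k`
is `θ_{k+1} = 2^{n_{k+1}}/N` for `k < p`, and `0` for `k ≥ p`. -/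
def eta (N : ℕ) : ℕ → ℝ :=
  fun k => ((binExps N).map fun n => (2 : ℝ) ^ n / (N : ℝ)).getD k 0

/-- `H(θ; s)` for a finite vector of length `p` given (0-indexed) by `θ : ℕ → ℝ`:
`H(θ;s) = Σ_{k=1}^p θ_k^{s+1} + 2(2^s − 1) Σ_{k=1}^{p−1} θ_k^s Σ_{j=k+1}^p θ_j`. -/
def Hvec (θ : ℕ → ℝ) (p : ℕ) (s : ℝ) : ℝ :=
  (∑ k ∈ Finset.range p, θ k ^ (s + 1)) +
    2 * ((2 : ℝ) ^ s - 1) *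
      ∑ k ∈ Finset.range p, θ k ^ s * ∑ j ∈ Finset.Ico (k + 1) p, θ j

/-- `K(θ) = 2 log 2 + Σ_{k=1}^p θ_k² log(θ_k/4) + 2 Σ_{k=1}^{p−1} (Σ_{j=k+1}^p θ_j) θ_k log θ_k`. -/
def Kvec (θ : ℕ → ℝ) (p : ℕ) : ℝ :=
  2 * Real.log 2 + (∑ k ∈ Finset.range p, θ k ^ 2 * Real.log (θ k / 4)) +
    2 * ∑ k ∈ Finset.range p, (∑ j ∈ Finset.Ico (k + 1) p, θ j) * (θ k * Real.log (θ k))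

/-- `R(θ) = −(2 log 2) Σ_{k=1}^p (k−1) θ_k − Σ_{k=1}^p θ_k log θ_k` (0-indexed: `k−1 ↦ k`). -/
def Rvec (θ : ℕ → ℝ) (p : ℕ) : ℝ :=
  -(2 * Real.log 2) * (∑ k ∈ Finset.range p, (k : ℝ) * θ k) -
    ∑ k ∈ Finset.range p, θ k * Real.log (θ k)

/-- `G(θ; s) = Σ_{k=1}^p θ_k^s`. -/
def Gvec (θ : ℕ → ℝ) (p : ℕ) (s : ℝ) : ℝ := ∑ k ∈ Finset.range p, θ k ^ s

/-- `Λ(θ) = Σ_{k=1}^p θ_k log θ_k`. -/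
def Λvec (θ : ℕ → ℝ) (p : ℕ) : ℝ := ∑ k ∈ Finset.range p, θ k * Real.log (θ k)

/-- `H(η(N); s)`. -/
def Heta (N : ℕ) (s : ℝ) : ℝ := Hvec (eta N) (pbin N) s

/-- `K(η(N))`. -/
def Keta (N : ℕ) : ℝ := Kvec (eta N) (pbin N)

/-- `R(η(N))`. -/
def Reta (N : ℕ) : ℝ := Rvec (eta N) (pbin N)

/-- `G(η(N); s)`. -/
def Geta (N : ℕ) (s : ℝ) : ℝ := Gvec (eta N) (pbin N) s

/-- `Λ(η(N))`. -/
def Λeta (N : ℕ) : ℝ := Λvec (eta N) (pbin N)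

/-- The set `𝒮` of infinite sequences `ϑ` for which there is a strictly increasing
sequence of positive integers `N_m` with `ϑ_j = lim_m (η(N_m))_j` for every `j`. -/
def Sset : Set (ℕ → ℝ) :=
  {ϑ | ∃ Nm : ℕ → ℕ, StrictMono Nm ∧ (∀ m, 1 ≤ Nm m) ∧
        ∀ j, Tendsto (fun m => eta (Nm m) j) atTop (𝓝 (ϑ j))}

/-- `H(ϑ; s)` for an infinite sequence `ϑ` (0-indexed). The conventions
`ϑ_n log ϑ_n = 0` and `ϑ_n^s ϑ_j = 0` when `ϑ_n = 0` hold automatically,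
since `Real.log 0 = 0` and `(0:ℝ) ^ s = 0` for `s ≠ 0` (and the factor
`2^s − 1` vanishes when `s = 0`). -/
def Hinf (ϑ : ℕ → ℝ) (s : ℝ) : ℝ :=
  (∑' n : ℕ, ϑ n ^ (s + 1)) +
    2 * ((2 : ℝ) ^ s - 1) * ∑' n : ℕ, ϑ n ^ s * ∑' j : ℕ, ϑ (n + 1 + j)

/-- `K(ϑ)` for an infinite sequence `ϑ`. -/
def Kinf (ϑ : ℕ → ℝ) : ℝ :=
  2 * Real.log 2 + (∑' n : ℕ, ϑ n ^ 2 * Real.log (ϑ n / 4)) +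
    2 * ∑' n : ℕ, (∑' j : ℕ, ϑ (n + 1 + j)) * (ϑ n * Real.log (ϑ n))

/-- `R(ϑ)` for an infinite sequence `ϑ` (0-indexed: `n−1 ↦ n`). -/
def Rinf (ϑ : ℕ → ℝ) : ℝ :=
  -(2 * Real.log 2) * (∑' n : ℕ, (n : ℝ) * ϑ n) - ∑' n : ℕ, ϑ n * Real.log (ϑ n)

/-- The set of limit points of a real sequence: values of convergent subsequences. -/
def limitPoints (x : ℕ → ℝ) : Set ℝ :=
  {L | ∃ φ : ℕ → ℕ, StrictMono φ ∧ Tendsto (fun m => x (φ m)) atTop (𝓝 L)}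

/-- The Riesz `s`-kernel: `k_s(z,w) = |z−w|^{−s}` for `s ≠ 0`, `k_0(z,w) = −log|z−w|`. -/
def kernel (s : ℝ) (z w : ℂ) : ℝ :=
  if s = 0 then -Real.log ‖z - w‖ else ‖z - w‖ ^ (-s)

/-- The Riesz `s`-energy `E_s(a_0, …, a_{N−1}) = Σ_{i ≠ j} k_s(a_i, a_j)`. -/
def energy (s : ℝ) (a : ℕ → ℂ) (N : ℕ) : ℝ :=
  ∑ i ∈ Finset.range N, ∑ j ∈ Finset.range N,
    if i ≠ j then kernel s (a i) (a j) else 0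

/-- The potential `U_{N,s}(z) = Σ_{ℓ=0}^{N−1} k_s(z, a_ℓ)`. -/
def pot (s : ℝ) (a : ℕ → ℂ) (N : ℕ) (z : ℂ) : ℝ :=
  ∑ l ∈ Finset.range N, kernel s z (a l)

/-- A greedy `s`-energy sequence on the unit circle: all points lie on `S¹`, and for
every `N ≥ 1` the point `a_N` minimizes (if `s ≥ 0`) resp. maximizes (if `s < 0`)
the potential `U_{N,s}` over `S¹`. -/
def IsGreedy (s : ℝ) (a : ℕ → ℂ) : Prop :=
  (∀ n, ‖a n‖ = 1) ∧
    ∀ N, 1 ≤ N →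
      ((0 ≤ s → ∀ z : ℂ, ‖z‖ = 1 → pot s a N (a N) ≤ pot s a N z) ∧
        (s < 0 → ∀ z : ℂ, ‖z‖ = 1 → pot s a N z ≤ pot s a N (a N)))

/-- `I_s(σ) = 2^{−s} Γ((1−s)/2) / (√π Γ(1 − s/2))`. -/
def Isigma (s : ℝ) : ℝ :=
  (2 : ℝ) ^ (-s) / Real.sqrt Real.pi * (Real.Gamma ((1 - s) / 2) / Real.Gamma (1 - s / 2))

/-- The value `ζ(s)` of the Riemann zeta function at a real `s` (real part of the
analytically continued zeta function). -/
def zetaR (s : ℝ) : ℝ := (riemannZeta (s : ℂ)).re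

/-!
Only three properties of `θ = η(N)` matter: its entries are positive, they sum to `1`, and each
is at most half the previous one (the binary exponents strictly decrease). Halving gives
`θ_k ≤ 2^{-k}` and the tail bound `Σ_{j>k} θ_j ≤ θ_k`, hence `Σ_{j>k} θ_j ≤ 1/2`. With these the
bounds on `H` reduce to geometric series, and those on `K` and `R` to `Σ k θ_k ≤ 2` and the
entropy bound `-Σ θ_k log θ_k ≤ (1 + Σ k θ_k) log 2`, which is Gibbs' inequality against the
distribution `2^{-(k+1)}`.
-/

open Finset Real

structure IsDyadicWeights (θ : ℕ → ℝ) (p : ℕ) : Prop where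
  pos : ∀ k < p, 0 < θ k
  sum_eq_one : ∑ k ∈ range p, θ k = 1
  two_mul_le : ∀ k, k + 1 < p → 2 * θ (k + 1) ≤ θ k

theorem sq_sum_range_eq_add_two_mul_sum_tail {R : Type*} [CommSemiring R] (x : ℕ → R) (p : ℕ) :
    (∑ k ∈ range p, x k) ^ 2 =
      ∑ k ∈ range p, x k ^ 2 + 2 * ∑ k ∈ range p, x k * ∑ j ∈ Ico (k + 1) p, x j := by
  induction p with
  | zero => simp
  | succ p ih =>
    have htail : ∑ k ∈ range (p + 1), x k * ∑ j ∈ Ico (k + 1) (p + 1), x j =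
        ∑ k ∈ range p, x k * ∑ j ∈ Ico (k + 1) p, x j + (∑ k ∈ range p, x k) * x p := by
      rw [sum_range_succ, Ico_self, sum_empty, mul_zero, add_zero, sum_mul, ← sum_add_distrib]
      refine sum_congr rfl fun k hk => ?_
      rw [sum_Ico_succ_top (by simpa using hk), mul_add]
    rw [sum_range_succ, add_sq, ih, sum_range_succ (fun k => x k ^ 2), htail]
    ring

theorem List.sum_range_length_getD {M : Type*} [AddCommMonoid M] (l : List M) :
    ∑ k ∈ range l.length, l.getD k 0 = l.sum := by
  rw [Finset.sum_range]
  simp [Fin.sum_univ_getElem]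

theorem two_rpow_add_one_sub_one (s : ℝ) : (2 : ℝ) ^ (s + 1) - 1 = 1 + 2 * (2 ^ s - 1) := by
  rw [rpow_add_one two_ne_zero]
  ring

namespace IsDyadicWeights

variable {θ : ℕ → ℝ} {p k : ℕ} {s : ℝ}

theorem pos_length (hθ : IsDyadicWeights θ p) : 0 < p := by
  by_contra! hp
  simpa [Nat.le_zero.1 hp] using hθ.sum_eq_one

theorem le_one (hθ : IsDyadicWeights θ p) (hk : k < p) : θ k ≤ 1 :=
  hθ.sum_eq_one ▸ single_le_sum (fun j hj => (hθ.pos j (mem_range.1 hj)).le) (mem_range.2 hk)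

theorem le_inv_two_pow (hθ : IsDyadicWeights θ p) (hk : k < p) : θ k ≤ 2⁻¹ ^ k := by
  induction k with
  | zero => simpa using hθ.le_one hk
  | succ k ih =>
    rw [pow_succ]
    linarith [ih (by omega), hθ.two_mul_le k hk]

theorem tail_nonneg (hθ : IsDyadicWeights θ p) (k : ℕ) : 0 ≤ ∑ j ∈ Ico (k + 1) p, θ j :=
  sum_nonneg fun j hj => (hθ.pos j (mem_Ico.1 hj).2).le

theorem tail_le (hθ : IsDyadicWeights θ p) (hk : k < p) : ∑ j ∈ Ico (k + 1) p, θ j ≤ θ k := by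
  suffices ∀ n k, k + 1 + n = p → ∑ j ∈ Ico (k + 1) p, θ j ≤ θ k from
    this (p - (k + 1)) k (by omega)
  intro n
  induction n with
  | zero =>
    intro k hkp
    simpa [← hkp] using (hθ.pos k (by omega)).le
  | succ n ih =>
    intro k hkp
    rw [sum_eq_sum_Ico_succ_bot (by omega)]
    linarith [ih (k + 1) (by omega), hθ.two_mul_le k (by omega)]

theorem tail_le_half (hθ : IsDyadicWeights θ p) (k : ℕ) : ∑ j ∈ Ico (k + 1) p, θ j ≤ 1 / 2 := by
  have hp := hθ.pos_length
  have hsplit : θ 0 + ∑ j ∈ Ico 1 p, θ j = 1 := by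
    rw [← sum_eq_sum_Ico_succ_bot hp, ← range_eq_Ico, hθ.sum_eq_one]
  have hsub : ∑ j ∈ Ico (k + 1) p, θ j ≤ ∑ j ∈ Ico 1 p, θ j :=
    sum_le_sum_of_subset_of_nonneg (Ico_subset_Ico (by omega) le_rfl)
      fun j hj _ => (hθ.pos j (mem_Ico.1 hj).2).le
  linarith [hθ.tail_le hp]

theorem sum_rpow_pos (hθ : IsDyadicWeights θ p) (s : ℝ) : 0 < ∑ k ∈ range p, θ k ^ s :=
  sum_pos (fun k hk => rpow_pos_of_pos (hθ.pos k (mem_range.1 hk)) s)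
    (nonempty_range_iff.2 hθ.pos_length.ne')

theorem sum_rpow_le_one (hθ : IsDyadicWeights θ p) (hs : 1 ≤ s) : ∑ k ∈ range p, θ k ^ s ≤ 1 :=
  hθ.sum_eq_one ▸ sum_le_sum fun k hk =>
    rpow_le_self_of_le_one (hθ.pos k (mem_range.1 hk)).le (hθ.le_one (mem_range.1 hk)) hs

theorem sum_rpow_lt (hθ : IsDyadicWeights θ p) (hs : 0 < s) :
    ∑ k ∈ range p, θ k ^ s < 2 ^ s / (2 ^ s - 1) := by
  have ha : 1 < (2 : ℝ) ^ s := one_lt_rpow one_lt_two hs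
  set r := ((2 : ℝ) ^ s)⁻¹ with hr
  have hr1 : r < 1 := inv_lt_one_of_one_lt₀ ha
  have hgeom : ∑ k ∈ range p, r ^ k < (1 - r)⁻¹ := by
    rw [← mul_lt_mul_iff_of_pos_left (sub_pos.2 hr1), mul_inv_cancel₀ (sub_pos.2 hr1).ne',
      mul_neg_geom_sum]
    linarith [pow_pos (inv_pos.2 (zero_lt_one.trans ha)) p]
  have hterm : ∀ k ∈ range p, θ k ^ s ≤ r ^ k := fun k hk => by
    rw [hr, ← inv_rpow zero_le_two, rpow_pow_comm (by norm_num)]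
    exact rpow_le_rpow (hθ.pos k (mem_range.1 hk)).le (hθ.le_inv_two_pow (mem_range.1 hk)) hs.le
  calc ∑ k ∈ range p, θ k ^ s ≤ ∑ k ∈ range p, r ^ k := sum_le_sum hterm
    _ < (1 - r)⁻¹ := hgeom
    _ = 2 ^ s / (2 ^ s - 1) := by
      have : (2 : ℝ) ^ s - 1 ≠ 0 := by linarith
      rw [hr]
      field_simp

theorem sum_rpow_mul_tail_nonneg (hθ : IsDyadicWeights θ p) (s : ℝ) :
    0 ≤ ∑ k ∈ range p, θ k ^ s * ∑ j ∈ Ico (k + 1) p, θ j :=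
  sum_nonneg fun k hk =>
    mul_nonneg (rpow_nonneg (hθ.pos k (mem_range.1 hk)).le s) (hθ.tail_nonneg k)

theorem sum_rpow_mul_tail_le_sum_rpow_add_one (hθ : IsDyadicWeights θ p) (s : ℝ) :
    ∑ k ∈ range p, θ k ^ s * ∑ j ∈ Ico (k + 1) p, θ j ≤ ∑ k ∈ range p, θ k ^ (s + 1) :=
  sum_le_sum fun k hk => by
    have hpos := hθ.pos k (mem_range.1 hk)
    rw [rpow_add_one hpos.ne']
    exact mul_le_mul_of_nonneg_left (hθ.tail_le (mem_range.1 hk)) (rpow_nonneg hpos.le s)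

theorem sum_rpow_mul_tail_le_half (hθ : IsDyadicWeights θ p) (s : ℝ) :
    ∑ k ∈ range p, θ k ^ s * ∑ j ∈ Ico (k + 1) p, θ j ≤ (∑ k ∈ range p, θ k ^ s) / 2 := by
  rw [sum_div]
  exact sum_le_sum fun k hk => by
    rw [div_eq_mul_one_div]
    exact mul_le_mul_of_nonneg_left (hθ.tail_le_half k)
      (rpow_nonneg (hθ.pos k (mem_range.1 hk)).le s)

theorem Hvec_zero (hθ : IsDyadicWeights θ p) : Hvec θ p 0 = 1 := by
  simp [Hvec, hθ.sum_eq_one]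

theorem Hvec_one (hθ : IsDyadicWeights θ p) : Hvec θ p 1 = 1 := by
  have hsq : ∀ k, θ k ^ ((1 : ℝ) + 1) = θ k ^ 2 := fun k => by norm_num
  have hsplit := sq_sum_range_eq_add_two_mul_sum_tail θ p
  rw [hθ.sum_eq_one] at hsplit
  simp only [Hvec, hsq, rpow_one]
  linarith

theorem Hvec_pos (hθ : IsDyadicWeights θ p) (hs : -1 < s) : 0 < Hvec θ p s := by
  have hS1 := hθ.sum_rpow_pos (s + 1)
  have hS2 := hθ.sum_rpow_mul_tail_nonneg s
  rcases le_or_gt 0 s with hs0 | hs0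
  · have hc : 0 ≤ 2 * ((2 : ℝ) ^ s - 1) := by linarith [one_le_rpow one_le_two hs0]
    unfold Hvec
    nlinarith
  · -- the cross term is now negative, but `Σ_{j>k} θ_j ≤ θ_k` bounds it below by
    -- `2 (2^s - 1) Σ θ_k^(s+1)`, leaving the positive factor `2^(s+1) - 1`
    have hc : 2 * ((2 : ℝ) ^ s - 1) ≤ 0 := by
      linarith [rpow_le_one_of_one_le_of_nonpos one_le_two hs0.le]
    have hb : 0 < (2 : ℝ) ^ (s + 1) - 1 := by
      linarith [one_lt_rpow one_lt_two (by linarith : 0 < s + 1)]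
    have hcross := mul_le_mul_of_nonpos_left (hθ.sum_rpow_mul_tail_le_sum_rpow_add_one s) hc
    rw [two_rpow_add_one_sub_one] at hb
    unfold Hvec
    nlinarith

theorem Hvec_le_of_nonneg (hθ : IsDyadicWeights θ p) (hs : 0 ≤ s) :
    Hvec θ p s ≤ 2 ^ (s + 1) - 1 := by
  have hc : 0 ≤ 2 * ((2 : ℝ) ^ s - 1) := by linarith [one_le_rpow one_le_two hs]
  have hS1 := hθ.sum_rpow_le_one (by linarith : 1 ≤ s + 1)
  have hcross := mul_le_mul_of_nonneg_left (hθ.sum_rpow_mul_tail_le_sum_rpow_add_one s) hc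
  rw [two_rpow_add_one_sub_one]
  unfold Hvec
  nlinarith

theorem Hvec_le_one_add_mul_sum_rpow (hθ : IsDyadicWeights θ p) (hs : 0 ≤ s) :
    Hvec θ p s ≤ 1 + (2 ^ s - 1) * ∑ k ∈ range p, θ k ^ s := by
  have hc : 0 ≤ 2 * ((2 : ℝ) ^ s - 1) := by linarith [one_le_rpow one_le_two hs]
  have hS1 := hθ.sum_rpow_le_one (by linarith : 1 ≤ s + 1)
  have hcross := mul_le_mul_of_nonneg_left (hθ.sum_rpow_mul_tail_le_half s) hc
  unfold Hvec
  linarith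

theorem Hvec_lt_of_one_le (hθ : IsDyadicWeights θ p) (hs : 1 ≤ s) :
    Hvec θ p s < 2 ^ (s + 1) - 1 := by
  have ha : 2 ≤ (2 : ℝ) ^ s := by simpa using rpow_le_rpow_of_exponent_le one_le_two hs
  have hsum := mul_le_mul_of_nonneg_left (hθ.sum_rpow_le_one hs) (by linarith : (0 : ℝ) ≤ 2 ^ s - 1)
  rw [rpow_add_one two_ne_zero]
  linarith [hθ.Hvec_le_one_add_mul_sum_rpow (by linarith : (0 : ℝ) ≤ s)]

theorem Hvec_lt_of_pos_of_le_one (hθ : IsDyadicWeights θ p) (hs0 : 0 < s) (hs1 : s ≤ 1) :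
    Hvec θ p s < (2 ^ (s + 1) - 1) / (2 ^ s - 1) := by
  set a := (2 : ℝ) ^ s with ha
  have ha1 : 1 < a := one_lt_rpow one_lt_two hs0
  have ha2 : a ≤ 2 := by simpa using rpow_le_rpow_of_exponent_le one_le_two hs1
  have hsum := mul_lt_mul_of_pos_left (hθ.sum_rpow_lt hs0) (sub_pos.2 ha1)
  rw [← ha, mul_div_cancel₀ _ (sub_pos.2 ha1).ne'] at hsum
  have hH : Hvec θ p s < 1 + a := by
    linarith [hθ.Hvec_le_one_add_mul_sum_rpow hs0.le]
  rw [rpow_add_one two_ne_zero, ← ha, lt_div_iff₀ (sub_pos.2 ha1)]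
  nlinarith

theorem Hvec_lt_of_nonpos (hθ : IsDyadicWeights θ p) (hs1 : -1 < s) (hs0 : s ≤ 0) :
    Hvec θ p s < 2 ^ (s + 1) / (2 ^ (s + 1) - 1) := by
  have hc : 2 * ((2 : ℝ) ^ s - 1) ≤ 0 := by
    linarith [rpow_le_one_of_one_le_of_nonpos one_le_two hs0]
  have hcross := mul_nonpos_of_nonpos_of_nonneg hc (hθ.sum_rpow_mul_tail_nonneg s)
  have hS1 := hθ.sum_rpow_lt (by linarith : 0 < s + 1)
  unfold Hvec
  linarith

theorem sum_nat_mul_le_two (hθ : IsDyadicWeights θ p) : ∑ k ∈ range p, (k : ℝ) * θ k ≤ 2 :=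
  calc ∑ k ∈ range p, (k : ℝ) * θ k ≤ ∑ k ∈ range p, (k : ℝ) * 2⁻¹ ^ k :=
        sum_le_sum fun k hk =>
          mul_le_mul_of_nonneg_left (hθ.le_inv_two_pow (mem_range.1 hk)) k.cast_nonneg
    _ ≤ 2⁻¹ / (1 - 2⁻¹) ^ 2 := sum_le_hasSum _ (fun k _ => by positivity)
        (hasSum_coe_mul_geometric_of_norm_lt_one (by norm_num))
    _ = 2 := by norm_num

theorem sum_mul_log_nonpos (hθ : IsDyadicWeights θ p) : ∑ k ∈ range p, θ k * log (θ k) ≤ 0 :=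
  sum_nonpos fun k hk => mul_log_nonpos (hθ.pos k (mem_range.1 hk)).le (hθ.le_one (mem_range.1 hk))

theorem neg_sum_mul_log_le (hθ : IsDyadicWeights θ p) :
    -∑ k ∈ range p, θ k * log (θ k) ≤ (1 + ∑ k ∈ range p, (k : ℝ) * θ k) * log 2 := by
  have hterm : ∀ k ∈ range p, -(θ k * log (θ k)) ≤
      log 2 * ((k : ℝ) * θ k) + log 2 * θ k + (2⁻¹ ^ (k + 1) - θ k) := fun k hk => by
    have hpos := hθ.pos k (mem_range.1 hk)
    have hlog := log_le_sub_one_of_pos (div_pos (pow_pos (inv_pos.2 two_pos) (k + 1)) hpos)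
    rw [log_div (by positivity) hpos.ne', log_pow, log_inv] at hlog
    have := mul_le_mul_of_nonneg_left hlog hpos.le
    rw [mul_sub, mul_sub, mul_div_cancel₀ _ hpos.ne'] at this
    push_cast at this
    linarith
  have hgeom : ∑ k ∈ range p, (2⁻¹ : ℝ) ^ (k + 1) ≤ 1 := by
    simp_rw [pow_succ, ← sum_mul]
    linarith [sum_geometric_two_le p]
  have := sum_le_sum hterm
  rw [sum_neg_distrib, sum_add_distrib, sum_add_distrib, sum_sub_distrib, ← mul_sum, ← mul_sum,
    hθ.sum_eq_one] at this
  linarith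

theorem abs_Rvec_le (hθ : IsDyadicWeights θ p) : |Rvec θ p| ≤ 4 * log 2 := by
  have hlog := log_pos one_lt_two
  have hD := hθ.sum_nat_mul_le_two
  have hD0 : 0 ≤ ∑ k ∈ range p, (k : ℝ) * θ k :=
    sum_nonneg fun k hk => mul_nonneg k.cast_nonneg (hθ.pos k (mem_range.1 hk)).le
  have hDlog := mul_le_mul_of_nonneg_right hD hlog.le
  have hDlog0 := mul_nonneg hD0 hlog.le
  have hEnt := hθ.neg_sum_mul_log_le
  have hEnt0 := hθ.sum_mul_log_nonpos
  rw [Rvec, abs_le]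
  constructor <;> nlinarith

theorem abs_Kvec_le (hθ : IsDyadicWeights θ p) : |Kvec θ p| ≤ 3 * log 4 := by
  have hlog4 : log 4 = 2 * log 2 := by
    rw [show (4 : ℝ) = 2 ^ 2 by norm_num, log_pow, Nat.cast_ofNat]
  have hlog := log_pos one_lt_two
  have hpos : ∀ k ∈ range p, 0 < θ k := fun k hk => hθ.pos k (mem_range.1 hk)
  have hle : ∀ k ∈ range p, θ k ≤ 1 := fun k hk => hθ.le_one (mem_range.1 hk)
  have hsplit : ∑ k ∈ range p, θ k ^ 2 * log (θ k / 4) =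
      ∑ k ∈ range p, θ k * (θ k * log (θ k)) - (∑ k ∈ range p, θ k ^ 2) * log 4 := by
    rw [sum_mul, ← sum_sub_distrib]
    exact sum_congr rfl fun k hk => by rw [log_div (hpos k hk).ne' (by norm_num)]; ring
  have hsq : ∑ k ∈ range p, θ k ^ 2 ≤ 1 := hθ.sum_eq_one ▸ sum_le_sum fun k hk => by
    nlinarith [hpos k hk, hle k hk]
  have hsq0 : 0 ≤ ∑ k ∈ range p, θ k ^ 2 := sum_nonneg fun k _ => sq_nonneg _
  have hweight : ∀ w : ℕ → ℝ, (∀ k ∈ range p, 0 ≤ w k ∧ w k ≤ 1) →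
      ∑ k ∈ range p, θ k * log (θ k) ≤ ∑ k ∈ range p, w k * (θ k * log (θ k)) ∧
        ∑ k ∈ range p, w k * (θ k * log (θ k)) ≤ 0 := fun w hw =>
    ⟨sum_le_sum fun k hk => by
        simpa using
          mul_le_mul_of_nonpos_right (hw k hk).2 (mul_log_nonpos (hpos k hk).le (hle k hk)),
      sum_nonpos fun k hk => mul_nonpos_of_nonneg_of_nonpos (hw k hk).1
        (mul_log_nonpos (hpos k hk).le (hle k hk))⟩
  obtain ⟨hA, hA0⟩ := hweight θ fun k hk => ⟨(hpos k hk).le, hle k hk⟩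
  obtain ⟨hC, hC0⟩ := hweight (fun k => 2 * ∑ j ∈ Ico (k + 1) p, θ j)
    fun k _ => ⟨by linarith [hθ.tail_nonneg k], by linarith [hθ.tail_le_half k]⟩
  have hEnt := hθ.neg_sum_mul_log_le
  have hD := mul_le_mul_of_nonneg_right hθ.sum_nat_mul_le_two hlog.le
  have hsqlog := mul_le_mul_of_nonneg_right hsq (log_nonneg (by norm_num : (1 : ℝ) ≤ 4))
  have hsqlog0 := mul_nonneg hsq0 (log_nonneg (by norm_num : (1 : ℝ) ≤ 4))
  have hcross : 2 * ∑ k ∈ range p, (∑ j ∈ Ico (k + 1) p, θ j) * (θ k * log (θ k)) =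
      ∑ k ∈ range p, (2 * ∑ j ∈ Ico (k + 1) p, θ j) * (θ k * log (θ k)) := by
    rw [mul_sum]
    exact sum_congr rfl fun k _ => (mul_assoc _ _ _).symm
  rw [Kvec, hsplit, hcross, abs_le]
  constructor <;> linarith

end IsDyadicWeights

theorem binExps_eq_reverse_bitIndices (N : ℕ) : binExps N = N.bitIndices.reverse := by
  rw [binExps, List.reverse_inj]
  refine (List.pairwise_lt_range.filter _).eq_of_mem_iff Nat.bitIndices_sorted.pairwise fun i => ?_
  simp only [List.mem_filter, List.mem_range, Nat.mem_bitIndices, and_iff_right_iff_imp]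
  exact fun h => Nat.lt_succ_of_lt (Nat.lt_two_pow_self.trans_le (Nat.ge_two_pow_of_testBit h))

theorem eta_of_lt {N k : ℕ} (hk : k < pbin N) : eta N k = 2 ^ (binExps N)[k] / N := by
  rw [eta, List.getD_eq_getElem _ _ (by simpa [pbin] using hk), List.getElem_map]
  rfl

theorem sum_eta {N : ℕ} (hN : 1 ≤ N) : ∑ k ∈ range (pbin N), eta N k = 1 := by
  have hlen : pbin N = ((binExps N).map fun n => (2 : ℝ) ^ n / N).length := by simp [pbin]
  have hsum : ((N.bitIndices.map fun n => 2 ^ n : List ℕ).sum : ℝ) = N := by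
    rw [Nat.sum_map_two_pow_bitIndices]
  rw [Nat.cast_list_sum, List.map_map] at hsum
  simp only [Function.comp_def, Nat.cast_pow, Nat.cast_ofNat] at hsum
  unfold eta
  rw [hlen, List.sum_range_length_getD, binExps_eq_reverse_bitIndices, List.map_reverse,
    List.sum_reverse]
  simp_rw [div_eq_mul_inv]
  rw [List.sum_map_mul_right, hsum, mul_inv_cancel₀ (by positivity)]

theorem isDyadicWeights_eta {N : ℕ} (hN : 1 ≤ N) : IsDyadicWeights (eta N) (pbin N) where
  pos k hk := by
    rw [eta_of_lt hk]
    have : (0 : ℝ) < N := by exact_mod_cast hN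
    positivity
  sum_eq_one := sum_eta hN
  two_mul_le k hk := by
    have hsorted : (binExps N).Pairwise (· > ·) := by
      rw [binExps_eq_reverse_bitIndices, List.pairwise_reverse]
      exact Nat.bitIndices_sorted.pairwise
    have hk' : k + 1 < (binExps N).length := hk
    rw [eta_of_lt hk, eta_of_lt (k.lt_succ_self.trans hk), mul_div_assoc', ← pow_succ']
    gcongr
    · norm_num
    · exact List.pairwise_iff_getElem.1 hsorted k (k + 1) (k.lt_succ_self.trans hk') hk'
        k.lt_succ_self

theorem stmt8 :
    (∀ N : ℕ, 1 ≤ N → Heta N 0 = 1 ∧ Heta N 1 = 1) ∧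
    (∀ N : ℕ, 1 ≤ N → ∀ s : ℝ, 1 ≤ s →
      0 < Heta N s ∧ Heta N s < 2 ^ (s + 1) - 1) ∧
    (∀ N : ℕ, 1 ≤ N → ∀ s : ℝ, 0 < s → s < 1 →
      0 < Heta N s ∧ Heta N s < ((2 : ℝ) ^ (s + 1) - 1) / ((2 : ℝ) ^ s - 1)) ∧
    (∀ N : ℕ, 1 ≤ N → ∀ s : ℝ, -1 < s → s < 0 →
      0 < Heta N s ∧ Heta N s < (2 : ℝ) ^ (s + 1) / ((2 : ℝ) ^ (s + 1) - 1)) ∧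
    (∀ N : ℕ, 1 ≤ N → |Keta N| ≤ 5 * Real.log 4) ∧
    (∀ N : ℕ, 1 ≤ N → |Reta N| ≤ 6 * Real.log 2) ∧
    (∀ s : ℝ, -1 < s → ∃ C : ℝ, ∀ N : ℕ, 1 ≤ N → |Heta N s| ≤ C) ∧
    (∃ C : ℝ, ∀ N : ℕ, 1 ≤ N → |Keta N| ≤ C) ∧
    (∃ C : ℝ, ∀ N : ℕ, 1 ≤ N → |Reta N| ≤ C) := by
  have hK : ∀ N : ℕ, 1 ≤ N → |Keta N| ≤ 5 * log 4 := fun N hN =>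
    (isDyadicWeights_eta hN).abs_Kvec_le.trans (by linarith [log_pos (by norm_num : (1 : ℝ) < 4)])
  have hR : ∀ N : ℕ, 1 ≤ N → |Reta N| ≤ 6 * log 2 := fun N hN =>
    (isDyadicWeights_eta hN).abs_Rvec_le.trans (by linarith [log_pos one_lt_two])
  have hpos : ∀ N : ℕ, 1 ≤ N → ∀ s : ℝ, -1 < s → 0 < Heta N s := fun N hN s hs =>
    (isDyadicWeights_eta hN).Hvec_pos hs
  refine ⟨fun N hN => ⟨(isDyadicWeights_eta hN).Hvec_zero, (isDyadicWeights_eta hN).Hvec_one⟩,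
    fun N hN s hs => ⟨hpos N hN s (by linarith), (isDyadicWeights_eta hN).Hvec_lt_of_one_le hs⟩,
    fun N hN s hs0 hs1 => ⟨hpos N hN s (by linarith),
      (isDyadicWeights_eta hN).Hvec_lt_of_pos_of_le_one hs0 hs1.le⟩,
    fun N hN s hs1 hs0 => ⟨hpos N hN s hs1, (isDyadicWeights_eta hN).Hvec_lt_of_nonpos hs1 hs0.le⟩,
    hK, hR, fun s hs => ?_, ⟨_, hK⟩, ⟨_, hR⟩⟩
  rcases le_or_gt 0 s with hs0 | hs0
  · exact ⟨_, fun N hN => (abs_of_pos (hpos N hN s hs)).trans_le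
      ((isDyadicWeights_eta hN).Hvec_le_of_nonneg hs0)⟩
  · exact ⟨_, fun N hN => (abs_of_pos (hpos N hN s hs)).trans_le
      ((isDyadicWeights_eta hN).Hvec_lt_of_nonpos hs hs0.le).le⟩

end GreedyEnergy
end
end

section
/- For each integer p ≥ 1 let N(p) = (4^p − 1)/3 = Σ_{k=0}^{p−1} 2^{2k}. Then H(η(N(p)); −1) = 2p/3 + (4/9)(1 − 4^{−p}), and consequently lim_{p→∞} H(η(N(p)); −1)/log(N(p)+1) = 1/(3 log 2). Moreover, for every real s < −1 and every p ≥ 1, H(η(N(p)); s)/N(p)^{−(s+1)} = (1/3)(2^{s+1} + 1) Σ_{m=0}^{p−1} 4^{(s+1)m} − (2/3)(2^s − 1) Σ_{m=0}^{p−1} 4^{sm}, and consequently lim_{p→∞} H(η(N(p)); s)/N(p)^{−(s+1)} = (1 + 4^s(2^{s+1} − 3))/((1 − 4^{s+1})(1 − 4^s)) > 0. -/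
open Filter Topology

noncomputable section

namespace GreedyEnergy

/- ### Auxiliary lemmas -/

lemma testBit_Np (p i : ℕ) :
    (∑ k ∈ Finset.range p, 4 ^ k).testBit i = (i % 2 == 0 && i / 2 < p) := by
  induction p generalizing i with
  | zero => simp [Nat.testBit]
  | succ p ih =>
    have hN : (∑ k ∈ Finset.range (p+1), 4 ^ k) = 1 + 4 * ∑ k ∈ Finset.range p, 4 ^ k := by
      rw [Finset.sum_range_succ']
      simp [Finset.mul_sum, pow_succ, mul_comm]; ring
    rw [hN]
    match i with
    | 0 => simp [Nat.testBit_zero]; omega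
    | 1 =>
      rw [Nat.testBit_succ, Nat.testBit_zero]
      have : (1 + 4 * ∑ k ∈ Finset.range p, 4 ^ k) / 2 = 2 * ∑ k ∈ Finset.range p, 4 ^ k := by
        omega
      rw [this]
      simp [Nat.mul_mod_right]
    | (j+2) =>
      rw [Nat.testBit_succ, Nat.testBit_succ]
      have : (1 + 4 * ∑ k ∈ Finset.range p, 4 ^ k) / 2 / 2 = ∑ k ∈ Finset.range p, 4 ^ k := by
        omega
      rw [this, ih]
      have h2 : (j+2) % 2 = j % 2 := by omega
      have h3 : (j+2) / 2 = j / 2 + 1 := by omega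
      simp [h2, h3]

lemma binExps_Np (p : ℕ) :
    ((List.range ((∑ k ∈ Finset.range p, 4 ^ k) + 1)).filter
      fun i => (∑ k ∈ Finset.range p, 4 ^ k).testBit i) =
      (List.range p).map (fun k => 2 * k) := by
  set N := ∑ k ∈ Finset.range p, 4 ^ k with hN
  have hle : ∀ j, j < p → 2 * j ≤ N := by
    intro j hj
    have h1 : 4 ^ j ≤ N := Finset.single_le_sum (f := fun k => 4 ^ k)
      (fun _ _ => Nat.zero_le _) (Finset.mem_range.mpr hj)
    have h2 : 2 * j < 2 ^ (2 * j) := Nat.lt_two_pow_self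
    have h3 : (2:ℕ) ^ (2 * j) = 4 ^ j := by rw [pow_mul]; norm_num
    omega
  have hmem : ∀ i, i ∈ (List.range (N + 1)).filter (fun i => N.testBit i) ↔
      i ∈ (List.range p).map (fun k => 2 * k) := by
    intro i
    simp only [List.mem_filter, List.mem_range, List.mem_map]
    constructor
    · rintro ⟨-, h⟩
      rw [hN, testBit_Np, Bool.and_eq_true, beq_iff_eq, decide_eq_true_eq] at h
      exact ⟨i / 2, h.2, by omega⟩
    · rintro ⟨k, hk, rfl⟩
      refine ⟨by have := hle k hk; omega, ?_⟩
      rw [hN, testBit_Np, Bool.and_eq_true, beq_iff_eq, decide_eq_true_eq]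
      omega
  have hsort1 : List.Pairwise (· < ·) ((List.range (N + 1)).filter (fun i => N.testBit i)) :=
    List.pairwise_lt_range.filter _
  have hsort2 : List.Pairwise (· < ·) ((List.range p).map (fun k => 2 * k)) :=
    List.pairwise_lt_range.map _ (fun a b h => by omega)
  exact List.Perm.eq_of_pairwise (fun a b _ _ h1 h2 => by omega) hsort1 hsort2
    ((List.perm_ext_iff_of_nodup (hsort1.nodup) (hsort2.nodup)).mpr hmem)

lemma pbin_Np (p : ℕ) : pbin (∑ k ∈ Finset.range p, 4 ^ k) = p := by
  rw [pbin, binExps, binExps_Np, List.length_reverse, List.length_map, List.length_range]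

lemma eta_Np (p k : ℕ) (hk : k < p) :
    eta (∑ k ∈ Finset.range p, 4 ^ k) k =
      (4 : ℝ) ^ (p - 1 - k) / ((∑ k ∈ Finset.range p, 4 ^ k : ℕ) : ℝ) := by
  rw [eta, binExps, binExps_Np, List.map_reverse, List.map_map]
  rw [List.getD_eq_getElem _ _ (by simpa using hk)]
  rw [List.getElem_reverse]
  simp only [List.getElem_map, List.getElem_range, List.length_map, List.length_range,
    Function.comp_apply]
  rw [pow_mul]
  norm_num

lemma natpow_rpow {x : ℝ} (hx : 0 ≤ x) (n : ℕ) (t : ℝ) :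
    ((x : ℝ) ^ (n : ℕ)) ^ (t : ℝ) = (x ^ t) ^ (n : ℕ) := by
  rw [← Real.rpow_natCast x n, ← Real.rpow_mul hx, mul_comm, Real.rpow_mul hx,
    Real.rpow_natCast]

lemma rpow_mul_nat (t : ℝ) (m : ℕ) :
    (4 : ℝ) ^ (t * (m : ℝ)) = ((4 : ℝ) ^ t) ^ (m : ℕ) := by
  rw [Real.rpow_mul (by norm_num), Real.rpow_natCast]

lemma four_rpow (s : ℝ) : (4:ℝ) ^ s = ((2:ℝ)^s)^2 := by
  rw [show (4:ℝ) = (2:ℝ)^(2:ℕ) by norm_num, ← Real.rpow_natCast ((2:ℝ)^s) 2,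
    ← Real.rpow_natCast (2:ℝ) 2, ← Real.rpow_mul (by norm_num), ← Real.rpow_mul (by norm_num)]
  ring_nf

lemma cast_Np_pos (p : ℕ) (hp : 1 ≤ p) :
    (0:ℝ) < ((∑ k ∈ Finset.range p, 4 ^ k : ℕ) : ℝ) := by
  have : 0 < ∑ k ∈ Finset.range p, 4 ^ k :=
    Finset.sum_pos (fun k _ => Nat.pow_pos (by norm_num)) (by simp; omega)
  exact_mod_cast this

lemma cast_Np (p : ℕ) : ((∑ k ∈ Finset.range p, 4 ^ k : ℕ) : ℝ) = ((4:ℝ)^p - 1)/3 := by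
  push_cast
  rw [geom_sum_eq (by norm_num)]
  norm_num

lemma cast_Np_ge_one (p : ℕ) (hp : 1 ≤ p) :
    (1:ℝ) ≤ ((∑ k ∈ Finset.range p, 4 ^ k : ℕ) : ℝ) := by
  have : 1 ≤ ∑ k ∈ Finset.range p, 4 ^ k := by
    calc 1 = 4 ^ 0 := by norm_num
    _ ≤ ∑ k ∈ Finset.range p, 4 ^ k :=
      Finset.single_le_sum (f := fun k => 4 ^ k) (fun _ _ => Nat.zero_le _)
        (Finset.mem_range.mpr (by omega))
  exact_mod_cast this

lemma inner_sum (p k : ℕ) (hk : k < p) :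
    (∑ j ∈ Finset.Ico (k + 1) p, eta (∑ k ∈ Finset.range p, 4 ^ k) j) =
      ((4:ℝ) ^ (p - 1 - k) - 1) / (3 * ((∑ k ∈ Finset.range p, 4 ^ k : ℕ) : ℝ)) := by
  obtain ⟨c, hcdef⟩ : ∃ c : ℝ, ((∑ k ∈ Finset.range p, 4 ^ k : ℕ) : ℝ) = c := ⟨_, rfl⟩
  rw [hcdef]
  have h1 : ∀ j ∈ Finset.Ico (k+1) p,
      eta (∑ k ∈ Finset.range p, 4 ^ k) j = (4:ℝ) ^ (p - 1 - j) / c := by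
    intro j hj
    rw [Finset.mem_Ico] at hj
    rw [eta_Np p j hj.2, hcdef]
  rw [Finset.sum_congr rfl h1, ← Finset.sum_div]
  rw [Finset.sum_Ico_eq_sum_range]
  have h2 : ∀ j ∈ Finset.range (p - (k+1)),
      (4:ℝ) ^ (p - 1 - (k + 1 + j)) = (4:ℝ) ^ ((p - 1 - k) - 1 - j) := by
    intro j hj
    rw [Finset.mem_range] at hj
    congr 1
    omega
  rw [Finset.sum_congr rfl h2]
  have h3 : p - (k + 1) = p - 1 - k := by omega
  rw [h3, Finset.sum_range_reflect (fun m => (4:ℝ) ^ m) (p - 1 - k),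
    geom_sum_eq (by norm_num), div_div]
  norm_num

lemma Heta_formula (p : ℕ) (hp : 1 ≤ p) (s : ℝ) :
    Heta (∑ k ∈ Finset.range p, 4 ^ k) s =
      ((∑ k ∈ Finset.range p, 4 ^ k : ℕ) : ℝ) ^ (-(s + 1)) *
        (1 / 3 * ((2 : ℝ) ^ (s + 1) + 1) *
            (∑ m ∈ Finset.range p, (4 : ℝ) ^ ((s + 1) * (m : ℝ))) -
          2 / 3 * ((2 : ℝ) ^ s - 1) * ∑ m ∈ Finset.range p, (4 : ℝ) ^ (s * (m : ℝ))) := by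
  have hcpos : (0:ℝ) < ((∑ k ∈ Finset.range p, 4 ^ k : ℕ) : ℝ) := cast_Np_pos p hp
  obtain ⟨c, hcdef⟩ : ∃ c : ℝ, ((∑ k ∈ Finset.range p, 4 ^ k : ℕ) : ℝ) = c := ⟨_, rfl⟩
  rw [hcdef] at hcpos
  obtain ⟨a, hadef⟩ : ∃ a : ℝ, (2:ℝ) ^ s = a := ⟨_, rfl⟩
  have ha1 : (2:ℝ) ^ (s+1) = 2 * a := by
    rw [Real.rpow_add (by norm_num), Real.rpow_one, mul_comm, hadef]
  obtain ⟨x, hxdef⟩ : ∃ x : ℝ, (4:ℝ) ^ s = x := ⟨_, rfl⟩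
  have hy : (4:ℝ) ^ (s+1) = 4 * x := by
    rw [Real.rpow_add (by norm_num), Real.rpow_one, mul_comm, hxdef]
  obtain ⟨v, hvdef⟩ : ∃ v : ℝ, c ^ s = v := ⟨_, rfl⟩
  have hvpos : 0 < v := hvdef ▸ Real.rpow_pos_of_pos hcpos s
  have hu : c ^ (s+1) = v * c := by
    rw [Real.rpow_add hcpos, Real.rpow_one, hvdef]
  have hun : c ^ (-(s+1)) = (v * c)⁻¹ := by
    rw [Real.rpow_neg hcpos.le, hu]
  have hS1 : (∑ m ∈ Finset.range p, (4 : ℝ) ^ ((s + 1) * (m : ℝ))) =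
      ∑ m ∈ Finset.range p, (4 * x) ^ m :=
    Finset.sum_congr rfl fun m _ => by rw [rpow_mul_nat, hy]
  have hS2 : (∑ m ∈ Finset.range p, (4 : ℝ) ^ (s * (m : ℝ))) =
      ∑ m ∈ Finset.range p, x ^ m :=
    Finset.sum_congr rfl fun m _ => by rw [rpow_mul_nat, hxdef]
  have hA : (∑ k ∈ Finset.range p, eta (∑ k ∈ Finset.range p, 4 ^ k) k ^ (s + 1)) =
      (∑ m ∈ Finset.range p, (4 * x) ^ m) / (v * c) := by
    have e1 : ∀ k ∈ Finset.range p, eta (∑ k ∈ Finset.range p, 4 ^ k) k ^ (s + 1) =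
        ((4:ℝ) * x) ^ (p - 1 - k) / (v * c) := by
      intro k hk
      rw [Finset.mem_range] at hk
      rw [eta_Np p k hk, hcdef, Real.div_rpow (by positivity) hcpos.le,
        natpow_rpow (by norm_num : (0:ℝ) ≤ 4), hy, hu]
    rw [Finset.sum_congr rfl e1, ← Finset.sum_div,
      Finset.sum_range_reflect (fun m => ((4:ℝ) * x) ^ m) p]
  have hB : (∑ k ∈ Finset.range p, eta (∑ k ∈ Finset.range p, 4 ^ k) k ^ s *
      ∑ j ∈ Finset.Ico (k + 1) p, eta (∑ k ∈ Finset.range p, 4 ^ k) j) =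
      ((∑ m ∈ Finset.range p, (4 * x) ^ m) - ∑ m ∈ Finset.range p, x ^ m) /
        (3 * (v * c)) := by
    have e1 : ∀ k ∈ Finset.range p,
        eta (∑ k ∈ Finset.range p, 4 ^ k) k ^ s *
          (∑ j ∈ Finset.Ico (k + 1) p, eta (∑ k ∈ Finset.range p, 4 ^ k) j) =
        (((4:ℝ) * x) ^ (p - 1 - k) - x ^ (p - 1 - k)) / (3 * (v * c)) := by
      intro k hk
      rw [Finset.mem_range] at hk
      rw [eta_Np p k hk, inner_sum p k hk, hcdef,
        Real.div_rpow (by positivity) hcpos.le,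
        natpow_rpow (by norm_num : (0:ℝ) ≤ 4), hxdef, hvdef]
      have h4 : ((4:ℝ) * x) ^ (p-1-k) = (4:ℝ) ^ (p-1-k) * x ^ (p-1-k) := mul_pow _ _ _
      rw [h4]
      have hxpos : 0 < x := hxdef ▸ Real.rpow_pos_of_pos (by norm_num) s
      field_simp
    rw [Finset.sum_congr rfl e1, ← Finset.sum_div,
      Finset.sum_range_reflect (fun m => (((4:ℝ) * x) ^ m - x ^ m)) p,
      Finset.sum_sub_distrib]
  rw [Heta, Hvec, pbin_Np, hA, hB, hcdef, hun, hS1, hS2, ha1, hadef]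
  have hc0 : c ≠ 0 := hcpos.ne'
  have hv0 : v ≠ 0 := hvpos.ne'
  field_simp
  ring

lemma stmt10_part1 (p : ℕ) (hp : 1 ≤ p) :
    Heta (∑ k ∈ Finset.range p, 4 ^ k) (-1) =
      2 * (p : ℝ) / 3 + 4 / 9 * (1 - (4 : ℝ) ^ (-(p : ℝ))) := by
  rw [Heta_formula p hp (-1)]
  have e : (-1:ℝ) + 1 = 0 := by norm_num
  rw [e]
  have hS2 : (∑ m ∈ Finset.range p, (4 : ℝ) ^ ((-1:ℝ) * (m : ℝ))) =
      (((4:ℝ)⁻¹) ^ p - 1) / ((4:ℝ)⁻¹ - 1) := by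
    rw [Finset.sum_congr rfl fun m _ => by rw [rpow_mul_nat, Real.rpow_neg_one]]
    rw [geom_sum_eq (by norm_num)]
  rw [hS2, Real.rpow_neg_one, neg_zero, Real.rpow_zero, Real.rpow_zero]
  have h4 : (4:ℝ) ^ (-(p:ℝ)) = ((4:ℝ)⁻¹) ^ p := by
    rw [Real.rpow_neg (by norm_num), Real.rpow_natCast, inv_pow]
  rw [h4]
  simp only [zero_mul, Real.rpow_zero, Finset.sum_const, Finset.card_range, nsmul_eq_mul,
    mul_one]
  ring

lemma stmt10_part3 (s : ℝ) (p : ℕ) (hp : 1 ≤ p) :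
    Heta (∑ k ∈ Finset.range p, 4 ^ k) s /
        ((∑ k ∈ Finset.range p, 4 ^ k : ℕ) : ℝ) ^ (-(s + 1)) =
      1 / 3 * ((2 : ℝ) ^ (s + 1) + 1) *
          (∑ m ∈ Finset.range p, (4 : ℝ) ^ ((s + 1) * (m : ℝ))) -
        2 / 3 * ((2 : ℝ) ^ s - 1) * ∑ m ∈ Finset.range p, (4 : ℝ) ^ (s * (m : ℝ)) := by
  rw [Heta_formula p hp s]
  exact mul_div_cancel_left₀ _ (Real.rpow_pos_of_pos (cast_Np_pos p hp) _).ne'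

theorem stmt10 :
    (∀ p : ℕ, 1 ≤ p →
      Heta (∑ k ∈ Finset.range p, 4 ^ k) (-1) =
        2 * (p : ℝ) / 3 + 4 / 9 * (1 - (4 : ℝ) ^ (-(p : ℝ)))) ∧
    Tendsto (fun p : ℕ =>
        Heta (∑ k ∈ Finset.range p, 4 ^ k) (-1) /
          Real.log ((∑ k ∈ Finset.range p, 4 ^ k : ℕ) + 1))
      atTop (𝓝 (1 / (3 * Real.log 2))) ∧
    (∀ s : ℝ, s < -1 → ∀ p : ℕ, 1 ≤ p →
      Heta (∑ k ∈ Finset.range p, 4 ^ k) s /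
          ((∑ k ∈ Finset.range p, 4 ^ k : ℕ) : ℝ) ^ (-(s + 1)) =
        1 / 3 * ((2 : ℝ) ^ (s + 1) + 1) *
            (∑ m ∈ Finset.range p, (4 : ℝ) ^ ((s + 1) * (m : ℝ))) -
          2 / 3 * ((2 : ℝ) ^ s - 1) * ∑ m ∈ Finset.range p, (4 : ℝ) ^ (s * (m : ℝ))) ∧
    (∀ s : ℝ, s < -1 →
      Tendsto (fun p : ℕ =>
          Heta (∑ k ∈ Finset.range p, 4 ^ k) s /
            ((∑ k ∈ Finset.range p, 4 ^ k : ℕ) : ℝ) ^ (-(s + 1)))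
        atTop
        (𝓝 ((1 + (4 : ℝ) ^ s * ((2 : ℝ) ^ (s + 1) - 3)) /
          ((1 - (4 : ℝ) ^ (s + 1)) * (1 - (4 : ℝ) ^ s)))) ∧
      0 < (1 + (4 : ℝ) ^ s * ((2 : ℝ) ^ (s + 1) - 3)) /
          ((1 - (4 : ℝ) ^ (s + 1)) * (1 - (4 : ℝ) ^ s))) := by
  refine ⟨fun p hp => stmt10_part1 p hp, ?_, fun s _ p hp => stmt10_part3 s p hp,
    fun s hs => ?_⟩
  · -- part 2
    have T1 : Tendsto (fun p : ℕ => ((4:ℝ)⁻¹) ^ p) atTop (𝓝 0) :=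
      tendsto_pow_atTop_nhds_zero_of_lt_one (by norm_num) (by norm_num)
    have T2 : Tendsto (fun p : ℕ => 1 / (p:ℝ)) atTop (𝓝 0) :=
      tendsto_one_div_atTop_nhds_zero_nat
    have hnum : Tendsto
        (fun p : ℕ => (2 * (p : ℝ) / 3 + 4 / 9 * (1 - (4 : ℝ) ^ (-(p : ℝ)))) / (p:ℝ))
        atTop (𝓝 (2/3)) := by
      have key : Tendsto (fun p : ℕ => 2/3 + (4/9*(1-((4:ℝ)⁻¹)^p))*(1/(p:ℝ))) atTop
          (𝓝 (2/3 + (4/9*(1-0))*0)) :=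
        tendsto_const_nhds.add
          (((tendsto_const_nhds.sub T1).const_mul (4/9)).mul T2)
      rw [show (2/3 + (4/9*(1-(0:ℝ)))*0 : ℝ) = 2/3 by norm_num] at key
      refine key.congr' ?_
      filter_upwards [eventually_ge_atTop 1] with p hp
      have hp0 : ((p:ℝ)) ≠ 0 := by positivity
      have h4 : (4:ℝ) ^ (-(p:ℝ)) = ((4:ℝ)⁻¹) ^ p := by
        rw [Real.rpow_neg (by norm_num), Real.rpow_natCast, inv_pow]
      rw [h4]
      field_simp
    have hlog4 : Real.log 4 = 2 * Real.log 2 := by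
      rw [show (4:ℝ) = 2^(2:ℕ) by norm_num, Real.log_pow]
      norm_num
    have hden : Tendsto (fun p : ℕ =>
        Real.log (((∑ k ∈ Finset.range p, 4 ^ k : ℕ) : ℝ) + 1) / (p:ℝ))
        atTop (𝓝 (2 * Real.log 2)) := by
      have T1' : Tendsto (fun p : ℕ => ((4:ℝ)^p)⁻¹) atTop (𝓝 0) := by
        simpa [inv_pow] using
          tendsto_pow_atTop_nhds_zero_of_lt_one (by norm_num : (0:ℝ) ≤ 4⁻¹) (by norm_num)
      have Tlog : Tendsto (fun p : ℕ => Real.log (1 + 2*((4:ℝ)^p)⁻¹)) atTop (𝓝 0) := by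
        have h1 : Tendsto (fun p : ℕ => 1 + 2*((4:ℝ)^p)⁻¹) atTop (𝓝 1) := by
          simpa using tendsto_const_nhds.add (T1'.const_mul 2)
        have := ((Real.continuousAt_log one_ne_zero).tendsto).comp h1
        simpa [Function.comp_def] using this
      have key : Tendsto (fun p : ℕ =>
          Real.log 4 + (Real.log (1 + 2*((4:ℝ)^p)⁻¹) - Real.log 3)*(1/(p:ℝ))) atTop
          (𝓝 (Real.log 4 + (0 - Real.log 3)*0)) :=
        tendsto_const_nhds.add ((Tlog.sub tendsto_const_nhds).mul T2)
      rw [show (Real.log 4 + (0 - Real.log 3)*0 : ℝ) = Real.log 4 by ring, hlog4] at key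
      refine key.congr' ?_
      filter_upwards [eventually_ge_atTop 1] with p hp
      have hp0 : ((p:ℝ)) ≠ 0 := by positivity
      have h4p : (0:ℝ) < (4:ℝ)^p := by positivity
      have harg : ((∑ k ∈ Finset.range p, 4 ^ k : ℕ) : ℝ) + 1 =
          ((4:ℝ)^p * (1 + 2*((4:ℝ)^p)⁻¹))/3 := by
        rw [cast_Np]
        field_simp
        ring
      rw [harg, Real.log_div (by positivity) (by norm_num),
        Real.log_mul h4p.ne' (by positivity), Real.log_pow, hlog4]
      field_simp
      ring
    have hlog2 : (0:ℝ) < Real.log 2 := Real.log_pos (by norm_num)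
    have main := hnum.div hden (by positivity)
    rw [show ((2:ℝ)/3)/(2*Real.log 2) = 1/(3*Real.log 2) by
      field_simp] at main
    refine main.congr' ?_
    filter_upwards [eventually_ge_atTop 1] with p hp
    have hp0 : ((p:ℝ)) ≠ 0 := by
      have : (1:ℝ) ≤ (p:ℝ) := by exact_mod_cast hp
      linarith
    simp only [Pi.div_apply]
    rw [div_div_div_comm, div_self hp0, div_one, stmt10_part1 p hp]
  · -- part 4
    have ha0 : 0 < (2:ℝ) ^ s := Real.rpow_pos_of_pos (by norm_num) s
    have ha2 : (2:ℝ) ^ s < 1/2 := by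
      have := Real.rpow_lt_rpow_of_exponent_lt (by norm_num : (1:ℝ) < 2) hs
      rwa [Real.rpow_neg_one, show ((2:ℝ)⁻¹ = 1/2) by norm_num] at this
    obtain ⟨a, hadef⟩ : ∃ a : ℝ, (2:ℝ) ^ s = a := ⟨_, rfl⟩
    rw [hadef] at ha0 ha2
    have h21 : (2:ℝ) ^ (s+1) = 2 * a := by
      rw [Real.rpow_add (by norm_num), Real.rpow_one, mul_comm, hadef]
    have h4s : (4:ℝ) ^ s = a^2 := by rw [four_rpow, hadef]
    have h4s1 : (4:ℝ) ^ (s+1) = 4*a^2 := by rw [four_rpow, h21]; ring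
    have hd1 : (0:ℝ) < 1 - 4*a^2 := by nlinarith
    have hd2 : (0:ℝ) < 1 - a^2 := by nlinarith
    constructor
    · have hg1 : Tendsto (fun p : ℕ => ∑ m ∈ Finset.range p, (4 : ℝ) ^ ((s + 1) * (m : ℝ)))
          atTop (𝓝 (1 - 4*a^2)⁻¹) := by
        have e : ∀ p : ℕ, (∑ m ∈ Finset.range p, (4 : ℝ) ^ ((s + 1) * (m : ℝ))) =
            ∑ m ∈ Finset.range p, (4*a^2) ^ m := fun p =>
          Finset.sum_congr rfl fun m _ => by rw [rpow_mul_nat, h4s1]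
        simp only [e]
        exact (hasSum_geometric_of_lt_one (by nlinarith) (by nlinarith)).tendsto_sum_nat
      have hg2 : Tendsto (fun p : ℕ => ∑ m ∈ Finset.range p, (4 : ℝ) ^ (s * (m : ℝ)))
          atTop (𝓝 (1 - a^2)⁻¹) := by
        have e : ∀ p : ℕ, (∑ m ∈ Finset.range p, (4 : ℝ) ^ (s * (m : ℝ))) =
            ∑ m ∈ Finset.range p, (a^2) ^ m := fun p =>
          Finset.sum_congr rfl fun m _ => by rw [rpow_mul_nat, h4s]
        simp only [e]
        exact (hasSum_geometric_of_lt_one (by positivity) (by nlinarith)).tendsto_sum_nat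
      have main := (hg1.const_mul (1 / 3 * ((2 : ℝ) ^ (s + 1) + 1))).sub
        (hg2.const_mul (2 / 3 * ((2 : ℝ) ^ s - 1)))
      have hval : 1 / 3 * ((2 : ℝ) ^ (s + 1) + 1) * (1 - 4*a^2)⁻¹ -
          2 / 3 * ((2 : ℝ) ^ s - 1) * (1 - a^2)⁻¹ =
          (1 + (4 : ℝ) ^ s * ((2 : ℝ) ^ (s + 1) - 3)) /
            ((1 - (4 : ℝ) ^ (s + 1)) * (1 - (4 : ℝ) ^ s)) := by
        rw [h21, h4s, h4s1, hadef]
        have hd1' : (1 - 4*a^2) ≠ 0 := hd1.ne'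
        have hd2' : (1 - a^2) ≠ 0 := hd2.ne'
        have e1 : (1 - 4*a^2)⁻¹ * (1 - 4*a^2) = 1 := inv_mul_cancel₀ hd1'
        have e2 : (1 - a^2)⁻¹ * (1 - a^2) = 1 := inv_mul_cancel₀ hd2'
        rw [eq_div_iff (mul_ne_zero hd1' hd2')]
        linear_combination (1/3)*(2*a+1)*(1-a^2)*e1 - (2/3)*(a-1)*(1-4*a^2)*e2
      rw [hval] at main
      refine main.congr' ?_
      filter_upwards [eventually_ge_atTop 1] with p hp
      exact (stmt10_part3 s p hp).symm
    · rw [h21, h4s, h4s1]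
      have hnum : 1 + a^2*(2*a-3) = (1-a)^2*(2*a+1) := by ring
      rw [hnum]
      exact div_pos (mul_pos (pow_pos (by linarith) 2) (by linarith)) (mul_pos hd1 hd2)

end GreedyEnergy
end
end

section
/- Let ϑ = (ϑ_1, ϑ_2, ϑ_3, …) ∈ 𝒮. Then 1/2 ≤ ϑ_1 ≤ 1, Σ_{k=1}^∞ ϑ_k = 1, Σ_{k=1}^∞ ϑ_k |log ϑ_k| ≤ log 4 (with the convention ϑ_k log ϑ_k = 0 when ϑ_k = 0), and for every k ≥ 1: 0 ≤ ϑ_k ≤ 1/(2^k − 1), Σ_{j=k+1}^∞ ϑ_j ≤ ϑ_k, and Σ_{j=1}^k ϑ_j ≥ 1 − 1/2^{k−1}. -/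
open Filter Topology

noncomputable section

namespace GreedyEnergy

/-- numerator sequence -/
def numer (N : ℕ) (k : ℕ) : ℕ := ((binExps N).map (2 ^ ·)).getD k 0

lemma sorted_binExps (N : ℕ) : (binExps N).Pairwise (· > ·) := by
  unfold binExps
  rw [List.pairwise_reverse]
  exact List.pairwise_lt_range.filter _

lemma testBit_sum (w : ℕ) : ∀ N : ℕ, N < 2 ^ w →
    (∑ i ∈ Finset.range w, if N.testBit i then 2 ^ i else 0) = N := by
  induction w with
  | zero => intro N h; simp at h ⊢; omega
  | succ w ih =>
    intro N h
    rw [Finset.sum_range_succ']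
    have h2 : N / 2 < 2 ^ w := by
      rw [Nat.div_lt_iff_lt_mul (by norm_num)]
      calc N < 2 ^ (w+1) := h
        _ = 2 ^ w * 2 := by ring
    have hIH := ih (N / 2) h2
    have hstep : ∀ i, (if N.testBit (i+1) then 2 ^ (i+1) else 0)
        = 2 * (if (N/2).testBit i then 2 ^ i else 0) := by
      intro i
      rw [Nat.testBit_add_one]
      split
      · ring
      · ring
    have h0 : (if N.testBit 0 then 2 ^ 0 else 0) = N % 2 := by
      rw [Nat.testBit_zero]
      rcases Nat.mod_two_eq_zero_or_one N with h | h <;> simp [h]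
    calc (∑ i ∈ Finset.range w, if N.testBit (i+1) then 2 ^ (i+1) else 0)
          + (if N.testBit 0 then 2^0 else 0)
        = 2 * (∑ i ∈ Finset.range w, if (N/2).testBit i then 2 ^ i else 0)
          + N % 2 := by
          rw [Finset.mul_sum, h0]; congr 1; exact Finset.sum_congr rfl fun i _ => hstep i
      _ = 2 * (N / 2) + N % 2 := by rw [hIH]
      _ = N := by omega

lemma list_filter_map_sum (p : ℕ → Bool) (f : ℕ → ℕ) :
    ∀ L : List ℕ, ((L.filter p).map f).sum = (L.map fun i => if p i then f i else 0).sum := by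
  intro L
  induction L with
  | nil => simp
  | cons a t ih =>
    by_cases h : p a <;> simp [List.filter_cons, h, ih]

lemma list_range_map_sum (f : ℕ → ℕ) (n : ℕ) :
    ((List.range n).map f).sum = ∑ i ∈ Finset.range n, f i := by
  induction n with
  | zero => simp
  | succ n ih => rw [List.range_succ, Finset.sum_range_succ]; simp [ih]

lemma sum_list_binExps (N : ℕ) : (((binExps N).map (2 ^ ·)).sum) = N := by
  unfold binExps
  rw [List.map_reverse, List.sum_reverse, list_filter_map_sum, list_range_map_sum]
  exact testBit_sum (N+1) N (Nat.lt_of_lt_of_le (Nat.lt_succ_self N) (Nat.le_of_lt Nat.lt_two_pow_self))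

end GreedyEnergy
namespace GreedyEnergy

lemma sum_range_getD (L : List ℕ) : ∑ k ∈ Finset.range L.length, L.getD k 0 = L.sum := by
  induction L with
  | nil => simp
  | cons a t ih =>
    rw [List.length_cons, Finset.sum_range_succ']
    simp only [List.getD_cons_succ, List.getD_cons_zero, List.sum_cons, ih]
    omega

lemma numer_eq (N k : ℕ) (h : k < pbin N) : numer N k = 2 ^ (binExps N).get ⟨k, h⟩ := by
  unfold numer
  rw [List.getD_eq_getElem?_getD, List.getElem?_eq_getElem (by simpa [pbin] using h)]
  simp

lemma numer_eq_zero (N k : ℕ) (h : pbin N ≤ k) : numer N k = 0 := by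
  unfold numer
  rw [List.getD_eq_getElem?_getD, List.getElem?_eq_none (by simpa [pbin] using h)]
  rfl

lemma numer_pos (N k : ℕ) (h : k < pbin N) : 0 < numer N k := by
  rw [numer_eq N k h]; positivity

lemma sum_numer (N : ℕ) : ∑ k ∈ Finset.range (pbin N), numer N k = N := by
  have : pbin N = ((binExps N).map (2 ^ ·)).length := by simp [pbin]
  rw [this]
  unfold numer
  rw [sum_range_getD, sum_list_binExps]

/-- doubling -/
lemma numer_double (N k : ℕ) (h : k + 1 < pbin N) : 2 * numer N (k+1) ≤ numer N k := by
  have hk : k < pbin N := Nat.lt_of_succ_lt h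
  rw [numer_eq N k hk, numer_eq N (k+1) h]
  have hgt := (sorted_binExps N).rel_get_of_lt (a := ⟨k, hk⟩) (b := ⟨k+1, h⟩) (by exact Nat.lt_succ_self k)
  have this : (binExps N).get ⟨k+1, h⟩ + 1 ≤ (binExps N).get ⟨k, hk⟩ := hgt
  calc 2 * 2 ^ (binExps N).get ⟨k+1, h⟩ = 2 ^ ((binExps N).get ⟨k+1, h⟩ + 1) := by ring
    _ ≤ _ := Nat.pow_le_pow_right (by norm_num) this

lemma numer_iter (N k : ℕ) : ∀ d, k + d < pbin N → 2 ^ d * numer N (k + d) ≤ numer N k := by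
  intro d
  induction d with
  | zero => simp
  | succ d ih =>
    intro h
    have hd : k + d < pbin N := by omega
    have h1 : 2 * numer N (k + d + 1) ≤ numer N (k + d) := numer_double N (k+d) (by omega)
    calc 2 ^ (d+1) * numer N (k + (d+1)) = 2 ^ d * (2 * numer N (k + d + 1)) := by ring_nf
      _ ≤ 2 ^ d * numer N (k + d) := Nat.mul_le_mul_left _ h1
      _ ≤ numer N k := ih hd

/-- tail bound -/
lemma numer_tail (N : ℕ) : ∀ j k, k + j = pbin N → k < pbin N →
    ∑ i ∈ Finset.Ico (k+1) (pbin N), numer N i < numer N k := by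
  intro j
  induction j with
  | zero => intro k h hk; omega
  | succ j ih =>
    intro k h hk
    rcases Nat.lt_or_ge (k+1) (pbin N) with h1 | h1
    · have := ih (k+1) (by omega) h1
      rw [Finset.sum_eq_sum_Ico_succ_bot h1]
      have he : Finset.Ico (k+1+1) (pbin N) = Finset.Ico (k+2) (pbin N) := rfl
      rw [he] at this ⊢
      calc numer N (k+1) + ∑ i ∈ Finset.Ico (k+2) (pbin N), numer N i
          < numer N (k+1) + numer N (k+1) := by omega
        _ = 2 * numer N (k+1) := by ring
        _ ≤ numer N k := numer_double N k h1
    · rw [Finset.Ico_eq_empty (by omega)]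
      simpa using numer_pos N k hk

lemma two_pow_sum (n : ℕ) : ∑ j ∈ Finset.range n, 2 ^ j = 2 ^ n - 1 := by
  induction n with
  | zero => simp
  | succ n ih =>
    rw [Finset.sum_range_succ, ih]
    have : 1 ≤ 2 ^ n := Nat.one_le_two_pow
    have h2 : 2 ^ (n+1) = 2 * 2 ^ n := by ring
    omega

/-- partial-sum lower bound -/
lemma numer_head (N k : ℕ) (h : k < pbin N) :
    (2 ^ (k+1) - 1) * numer N k ≤ ∑ j ∈ Finset.range (k+1), numer N j := by
  have key : ∀ j ∈ Finset.range (k+1), 2 ^ (k - j) * numer N k ≤ numer N j := by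
    intro j hj
    rw [Finset.mem_range] at hj
    have := numer_iter N j (k - j) (by omega)
    rwa [Nat.add_sub_cancel' (by omega)] at this
  calc (2 ^ (k+1) - 1) * numer N k = (∑ j ∈ Finset.range (k+1), 2 ^ j) * numer N k := by
        rw [two_pow_sum]
    _ = ∑ j ∈ Finset.range (k+1), 2 ^ (k - j) * numer N k := by
        rw [← Finset.sum_mul]
        congr 1
        rw [← Finset.sum_range_reflect (fun j => 2 ^ j) (k+1)]
        apply Finset.sum_congr rfl
        intro j hj
        have hkj : k + 1 - 1 - j = k - j := by omega
        rw [hkj]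
    _ ≤ _ := Finset.sum_le_sum key

lemma numer_partial_le (N m : ℕ) : ∑ j ∈ Finset.range m, numer N j ≤ N := by
  rcases le_or_gt m (pbin N) with h | h
  · calc ∑ j ∈ Finset.range m, numer N j ≤ ∑ j ∈ Finset.range (pbin N), numer N j :=
        Finset.sum_le_sum_of_subset (Finset.range_subset_range.mpr h)
      _ = N := sum_numer N
  · have heq : ∑ j ∈ Finset.range m, numer N j = ∑ j ∈ Finset.range (pbin N), numer N j := by
      symm
      apply Finset.sum_subset (Finset.range_subset_range.mpr (le_of_lt h))
      intro x _ hx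
      rw [Finset.mem_range, not_lt] at hx
      exact numer_eq_zero N x hx
    rw [heq, sum_numer]

lemma pbin_pos (N : ℕ) (hN : 1 ≤ N) : 0 < pbin N := by
  by_contra h
  push_neg at h
  have := sum_numer N
  rw [Nat.le_zero.mp h] at this
  simp at this
  omega

end GreedyEnergy
namespace GreedyEnergy

lemma eta_eq (N k : ℕ) : eta N k = (numer N k : ℝ) / N := by
  unfold eta numer
  rcases lt_or_ge k (pbin N) with h | h
  · rw [List.getD_eq_getElem?_getD, List.getD_eq_getElem?_getD,
      List.getElem?_eq_getElem (by simpa [pbin] using h),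
      List.getElem?_eq_getElem (by simpa [pbin] using h)]
    simp [List.getElem_map]
  · rw [List.getD_eq_getElem?_getD, List.getD_eq_getElem?_getD,
      List.getElem?_eq_none (by simpa [pbin] using h),
      List.getElem?_eq_none (by simpa [pbin] using h)]
    simp

lemma eta_nonneg (N k : ℕ) : 0 ≤ eta N k := by
  rw [eta_eq]; positivity

lemma eta_zero_of_ge (N k : ℕ) (h : pbin N ≤ k) : eta N k = 0 := by
  rw [eta_eq, numer_eq_zero N k h]; simp

section perN
variable {N : ℕ} (hN : 1 ≤ N)

include hN

lemma Npos : (0:ℝ) < (N:ℝ) := by exact_mod_cast hN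

lemma sum_eta_range (m : ℕ) :
    ∑ k ∈ Finset.range m, eta N k = (∑ k ∈ Finset.range m, (numer N k : ℝ)) / N := by
  rw [Finset.sum_div]
  exact Finset.sum_congr rfl fun k _ => eta_eq N k

lemma sum_eta_full : ∑ k ∈ Finset.range (pbin N), eta N k = 1 := by
  rw [sum_eta_range hN, ← Nat.cast_sum, sum_numer, div_self (ne_of_gt (Npos hN))]

lemma sum_eta_le_one (m : ℕ) : ∑ k ∈ Finset.range m, eta N k ≤ 1 := by
  rw [sum_eta_range hN, div_le_one (Npos hN), ← Nat.cast_sum]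
  exact_mod_cast numer_partial_le N m

lemma numer_le_N (k : ℕ) : numer N k ≤ N := by
  calc numer N k ≤ ∑ j ∈ Finset.range (k+1), numer N j :=
      Finset.single_le_sum (fun i _ => Nat.zero_le _) (Finset.self_mem_range_succ k)
    _ ≤ N := numer_partial_le N (k+1)

lemma eta_le_one (k : ℕ) : eta N k ≤ 1 := by
  rw [eta_eq, div_le_one (Npos hN)]
  exact_mod_cast numer_le_N hN k

lemma eta_zero_ge_half : 1/2 ≤ eta N 0 := by
  have hp : 0 < pbin N := pbin_pos N hN
  have htail := numer_tail N (pbin N) 0 (by omega) hp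
  have hsplit : numer N 0 + ∑ i ∈ Finset.Ico (0+1) (pbin N), numer N i = N := by
    have := sum_numer N
    rwa [Finset.range_eq_Ico, Finset.sum_eq_sum_Ico_succ_bot hp] at this
  have hNlt : N < 2 * numer N 0 := by omega
  rw [eta_eq, le_div_iff₀ (Npos hN)]
  have : (N:ℝ) ≤ 2 * (numer N 0 : ℝ) := by exact_mod_cast hNlt.le
  linarith

lemma eta_le_bound (k : ℕ) : eta N k ≤ 1 / ((2:ℝ) ^ (k+1) - 1) := by
  have hpow : (1:ℝ) < (2:ℝ) ^ (k+1) := by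
    calc (1:ℝ) < 2 := one_lt_two
      _ ≤ (2:ℝ)^(k+1) := le_self_pow₀ one_le_two (by omega)
  have hden : (0:ℝ) < (2:ℝ) ^ (k+1) - 1 := by linarith
  rcases lt_or_ge k (pbin N) with h | h
  · have hnat : (2 ^ (k+1) - 1) * numer N k ≤ N :=
      le_trans (numer_head N k h) (numer_partial_le N (k+1))
    rw [eta_eq, div_le_div_iff₀ (Npos hN) hden]
    have hc : ((2 ^ (k+1) - 1 : ℕ) : ℝ) = (2:ℝ)^(k+1) - 1 := by
      push_cast [Nat.cast_sub (Nat.one_le_two_pow)]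
      ring
    calc (numer N k : ℝ) * ((2:ℝ)^(k+1) - 1) = ((2 ^ (k+1) - 1) * numer N k : ℕ) := by
          rw [Nat.cast_mul, hc]; ring
      _ ≤ (N:ℝ) := by exact_mod_cast hnat
      _ = 1 * (N:ℝ) := by ring
  · rw [eta_zero_of_ge N k h]
    positivity

lemma eta_tail_le (k : ℕ) : ∀ b, ∑ j ∈ Finset.Ico (k+1) b, eta N j ≤ eta N k := by
  intro b
  rcases lt_or_ge k (pbin N) with h | h
  · set P := pbin N with hP
    have h1 : ∑ j ∈ Finset.Ico (k+1) b, eta N j ≤ ∑ j ∈ Finset.Ico (k+1) (max b P), eta N j :=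
      Finset.sum_le_sum_of_subset_of_nonneg
        (Finset.Ico_subset_Ico le_rfl (le_max_left _ _)) (fun i _ _ => eta_nonneg N i)
    have h2 : ∑ j ∈ Finset.Ico (k+1) (max b P), eta N j
        = ∑ j ∈ Finset.Ico (k+1) P, eta N j + ∑ j ∈ Finset.Ico P (max b P), eta N j :=
      (Finset.sum_Ico_consecutive _ (by omega) (le_max_right _ _)).symm
    have h3 : ∑ j ∈ Finset.Ico P (max b P), eta N j = 0 :=
      Finset.sum_eq_zero fun i hi => eta_zero_of_ge N i (Finset.mem_Ico.mp hi).1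
    have h4 : ∑ j ∈ Finset.Ico (k+1) P, eta N j ≤ eta N k := by
      have hnat : ∑ i ∈ Finset.Ico (k+1) P, numer N i < numer N k :=
        numer_tail N (P - k) k (by omega) h
      have hrw : ∑ j ∈ Finset.Ico (k+1) P, eta N j
          = (∑ i ∈ Finset.Ico (k+1) P, (numer N i : ℝ)) / N := by
        rw [Finset.sum_div]
        exact Finset.sum_congr rfl fun i _ => eta_eq N i
      rw [hrw, eta_eq]
      have hle : (∑ i ∈ Finset.Ico (k+1) P, (numer N i:ℝ)) ≤ (numer N k : ℝ) := by
        push_cast [← Nat.cast_sum]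
        exact_mod_cast hnat.le
      gcongr
    calc ∑ j ∈ Finset.Ico (k+1) b, eta N j ≤ _ := h1
      _ = _ := h2
      _ ≤ eta N k := by rw [h3]; simpa using h4
  · have : ∑ j ∈ Finset.Ico (k+1) b, eta N j = 0 :=
      Finset.sum_eq_zero fun i hi => eta_zero_of_ge N i (by
        have := (Finset.mem_Ico.mp hi).1; omega)
    rw [this, eta_zero_of_ge N k h]

end perN
end GreedyEnergy
namespace GreedyEnergy
section perN2
variable {N : ℕ} (hN : 1 ≤ N)
include hN

lemma FS_bound : ∀ j m, pbin N ≤ m + j →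
    ∑ k ∈ Finset.Ico m (pbin N), ((k + 1 - m : ℕ) : ℝ) * eta N k
      ≤ 2 * ∑ k ∈ Finset.Ico m (pbin N), eta N k := by
  intro j
  induction j with
  | zero =>
    intro m h
    rw [Finset.Ico_eq_empty (by omega)]
    simp
  | succ j ih =>
    intro m h
    rcases le_or_gt (pbin N) m with hm | hm
    · rw [Finset.Ico_eq_empty (by omega)]
      simp
    · have htail : ∑ k ∈ Finset.Ico (m+1) (pbin N), eta N k ≤ eta N m :=
        eta_tail_le hN m (pbin N)
      have hih := ih (m+1) (by omega)
      rw [Finset.sum_eq_sum_Ico_succ_bot hm (f := fun k => ((k + 1 - m : ℕ) : ℝ) * eta N k),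
        Finset.sum_eq_sum_Ico_succ_bot hm (f := fun k => eta N k)]
      have hco : ∑ k ∈ Finset.Ico (m+1) (pbin N), ((k + 1 - m : ℕ) : ℝ) * eta N k
          = ∑ k ∈ Finset.Ico (m+1) (pbin N), (((k + 1 - (m+1) : ℕ) : ℝ) + 1) * eta N k := by
        apply Finset.sum_congr rfl
        intro k hk
        have hk1 := (Finset.mem_Ico.mp hk).1
        have : ((k + 1 - m : ℕ) : ℝ) = ((k + 1 - (m+1) : ℕ) : ℝ) + 1 := by
          have : k + 1 - m = (k + 1 - (m+1)) + 1 := by omega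
          rw [this]; push_cast; ring
        rw [this]
      rw [hco]
      have hexp : ∑ k ∈ Finset.Ico (m+1) (pbin N), (((k + 1 - (m+1) : ℕ) : ℝ) + 1) * eta N k
          = (∑ k ∈ Finset.Ico (m+1) (pbin N), ((k + 1 - (m+1) : ℕ) : ℝ) * eta N k)
            + ∑ k ∈ Finset.Ico (m+1) (pbin N), eta N k := by
        rw [← Finset.sum_add_distrib]
        apply Finset.sum_congr rfl
        intro k _
        ring
      rw [hexp]
      have h0 : ((m + 1 - m : ℕ) : ℝ) = 1 := by
        have : m + 1 - m = 1 := by omega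
        rw [this]; norm_num
      rw [h0]
      set S := ∑ k ∈ Finset.Ico (m+1) (pbin N), eta N k
      set F := ∑ k ∈ Finset.Ico (m+1) (pbin N), ((k + 1 - (m+1) : ℕ) : ℝ) * eta N k
      linarith

lemma weighted_sum_le : ∑ k ∈ Finset.range (pbin N), ((k : ℝ) + 1) * eta N k ≤ 2 := by
  have := FS_bound hN (pbin N) 0 (by omega)
  rw [← Finset.range_eq_Ico] at this
  have hco : ∑ k ∈ Finset.range (pbin N), ((k : ℝ) + 1) * eta N k
      = ∑ k ∈ Finset.range (pbin N), ((k + 1 - 0 : ℕ) : ℝ) * eta N k := by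
    apply Finset.sum_congr rfl
    intro k _
    norm_num
  rw [hco]
  calc _ ≤ 2 * ∑ k ∈ Finset.range (pbin N), eta N k := this
    _ = 2 := by rw [sum_eta_full hN]; norm_num

lemma entropy_term_le (k : ℕ) (h : k < pbin N) :
    eta N k * |Real.log (eta N k)| ≤
      ((1/2:ℝ)^(k+1) - eta N k) + ((k:ℝ)+1) * Real.log 2 * eta N k := by
  set θ := eta N k with hθ
  have hθpos : 0 < θ := by
    rw [hθ, eta_eq]
    have := numer_pos N k h
    have := Npos hN
    positivity
  have hθ1 : θ ≤ 1 := eta_le_one hN k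
  have hlogle : Real.log θ ≤ 0 := Real.log_nonpos hθpos.le hθ1
  have habs : |Real.log θ| = -Real.log θ := abs_of_nonpos hlogle
  rw [habs]
  set q : ℝ := (1/2:ℝ)^(k+1) with hq
  have hqpos : 0 < q := by positivity
  have hgibbs : Real.log (q / θ) ≤ q / θ - 1 :=
    Real.log_le_sub_one_of_pos (by positivity)
  have hmul : θ * Real.log (q / θ) ≤ q - θ := by
    have := mul_le_mul_of_nonneg_left hgibbs hθpos.le
    calc θ * Real.log (q / θ) ≤ θ * (q / θ - 1) := this
      _ = q - θ := by field_simp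
  have hlogq : Real.log q = -(((k:ℝ)+1) * Real.log 2) := by
    rw [hq, Real.log_pow]
    have : Real.log (1/2 : ℝ) = -Real.log 2 := by
      rw [one_div, Real.log_inv]
    rw [this]
    push_cast
    ring
  have hsplit : Real.log (q / θ) = Real.log q - Real.log θ :=
    Real.log_div (ne_of_gt hqpos) (ne_of_gt hθpos)
  have hkey : θ * (-Real.log θ) = θ * Real.log (q / θ) - θ * Real.log q := by
    rw [hsplit]; ring
  have hq2 : θ * Real.log q = -(((k:ℝ)+1) * Real.log 2) * θ := by rw [hlogq]; ring
  have : θ * (-Real.log θ) ≤ (q - θ) + ((k:ℝ)+1) * Real.log 2 * θ := by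
    rw [hkey, hq2]; linarith [hmul]
  calc θ * -Real.log θ = θ * (-Real.log θ) := by ring
    _ ≤ (q - θ) + ((k:ℝ)+1) * Real.log 2 * θ := this
    _ = ((1/2:ℝ)^(k+1) - θ) + ((k:ℝ)+1) * Real.log 2 * θ := by rw [hq]

end perN2
end GreedyEnergy
namespace GreedyEnergy
section perN3
variable {N : ℕ} (hN : 1 ≤ N)
include hN

lemma half_pow_sum_le (p : ℕ) : ∑ k ∈ Finset.range p, (1/2:ℝ)^(k+1) ≤ 1 := by
  have h : ∑ k ∈ Finset.range p, (1/2:ℝ)^k = ((1/2:ℝ)^p - 1) / ((1/2:ℝ) - 1) :=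
    geom_sum_eq (by norm_num) p
  have hpow : (0:ℝ) ≤ (1/2:ℝ)^p := by positivity
  have : ∑ k ∈ Finset.range p, (1/2:ℝ)^(k+1) = (1/2) * ∑ k ∈ Finset.range p, (1/2:ℝ)^k := by
    rw [Finset.mul_sum]
    exact Finset.sum_congr rfl fun k _ => by ring
  rw [this, h]
  have h1 : ((1/2:ℝ)^p - 1) / ((1/2:ℝ) - 1) = 2 * (1 - (1/2:ℝ)^p) := by
    field_simp
    ring
  rw [h1]
  linarith

lemma entropy_sum_le (m : ℕ) :
    ∑ k ∈ Finset.range m, eta N k * |Real.log (eta N k)| ≤ Real.log 4 := by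
  have hterm_nonneg : ∀ k, 0 ≤ eta N k * |Real.log (eta N k)| :=
    fun k => mul_nonneg (eta_nonneg N k) (abs_nonneg _)
  -- reduce to range (pbin N)
  have hred : ∑ k ∈ Finset.range m, eta N k * |Real.log (eta N k)|
      ≤ ∑ k ∈ Finset.range (pbin N), eta N k * |Real.log (eta N k)| := by
    rcases le_or_gt m (pbin N) with h | h
    · exact Finset.sum_le_sum_of_subset_of_nonneg (Finset.range_subset_range.mpr h)
        (fun i _ _ => hterm_nonneg i)
    · apply le_of_eq
      symm
      apply Finset.sum_subset (Finset.range_subset_range.mpr h.le)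
      intro x _ hx
      rw [Finset.mem_range, not_lt] at hx
      rw [eta_zero_of_ge N x hx]
      simp
  apply hred.trans
  have hbound : ∑ k ∈ Finset.range (pbin N), eta N k * |Real.log (eta N k)|
      ≤ ∑ k ∈ Finset.range (pbin N),
          (((1/2:ℝ)^(k+1) - eta N k) + ((k:ℝ)+1) * Real.log 2 * eta N k) :=
    Finset.sum_le_sum fun k hk => entropy_term_le hN k (Finset.mem_range.mp hk)
  apply hbound.trans
  rw [Finset.sum_add_distrib, Finset.sum_sub_distrib]
  have h1 : ∑ k ∈ Finset.range (pbin N), (1/2:ℝ)^(k+1) ≤ 1 := half_pow_sum_le hN (pbin N)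
  have h2 : ∑ k ∈ Finset.range (pbin N), eta N k = 1 := sum_eta_full hN
  have h3 : ∑ k ∈ Finset.range (pbin N), ((k:ℝ)+1) * Real.log 2 * eta N k
      = Real.log 2 * ∑ k ∈ Finset.range (pbin N), ((k:ℝ)+1) * eta N k := by
    rw [Finset.mul_sum]
    exact Finset.sum_congr rfl fun k _ => by ring
  have h4 := weighted_sum_le hN
  have hlog2 : (0:ℝ) ≤ Real.log 2 := Real.log_nonneg one_le_two
  have h5 : Real.log 2 * ∑ k ∈ Finset.range (pbin N), ((k:ℝ)+1) * eta N k ≤ Real.log 2 * 2 :=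
    mul_le_mul_of_nonneg_left h4 hlog2
  have hlog4 : Real.log 4 = 2 * Real.log 2 := by
    rw [show (4:ℝ) = 2^2 by norm_num, Real.log_pow]
    push_cast
    ring
  rw [hlog4, h2, h3]
  linarith

lemma partial_lower (k : ℕ) :
    1 - (1/2:ℝ)^k ≤ ∑ j ∈ Finset.range (k+1), eta N j := by
  rcases le_or_gt (pbin N) (k+1) with h | h
  · have : ∑ j ∈ Finset.range (k+1), eta N j = ∑ j ∈ Finset.range (pbin N), eta N j := by
      symm
      apply Finset.sum_subset (Finset.range_subset_range.mpr h)
      intro x _ hx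
      rw [Finset.mem_range, not_lt] at hx
      exact eta_zero_of_ge N x hx
    rw [this, sum_eta_full hN]
    have : (0:ℝ) ≤ (1/2:ℝ)^k := by positivity
    linarith
  · have hk : k < pbin N := by omega
    -- numer k * 2^k ≤ N
    have hnum : 2 ^ k * numer N k ≤ N := by
      have h1 : (2 ^ (k+1) - 1) * numer N k ≤ N :=
        le_trans (numer_head N k hk) (numer_partial_le N (k+1))
      have h2 : 2 ^ k ≤ 2 ^ (k+1) - 1 := by
        have : (2:ℕ) ^ (k+1) = 2 * 2 ^ k := by ring
        have h3 : 1 ≤ (2:ℕ)^k := Nat.one_le_two_pow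
        omega
      calc 2 ^ k * numer N k ≤ (2 ^ (k+1) - 1) * numer N k :=
          Nat.mul_le_mul_right _ h2
        _ ≤ N := h1
    -- split N
    have hsplit : ∑ j ∈ Finset.range (k+1), numer N j
        + ∑ j ∈ Finset.Ico (k+1) (pbin N), numer N j = N := by
      rw [Finset.range_eq_Ico, Finset.sum_Ico_consecutive _ (Nat.zero_le _) h.le,
        ← Finset.range_eq_Ico, sum_numer]
    have htail : ∑ j ∈ Finset.Ico (k+1) (pbin N), numer N j < numer N k :=
      numer_tail N (pbin N - k) k (by omega) hk
    have hge : N - numer N k ≤ ∑ j ∈ Finset.range (k+1), numer N j := by omega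
    rw [sum_eta_range hN, le_div_iff₀ (Npos hN)]
    have hc1 : ((N - numer N k : ℕ) : ℝ) ≤ ∑ j ∈ Finset.range (k+1), (numer N j : ℝ) := by
      push_cast [← Nat.cast_sum]
      exact_mod_cast hge
    have hc2 : (N:ℝ) - (numer N k : ℝ) = ((N - numer N k : ℕ) : ℝ) := by
      rw [Nat.cast_sub (numer_le_N hN k)]
    have hc3 : (numer N k : ℝ) * 2^k ≤ N := by
      calc (numer N k : ℝ) * 2^k = ((2 ^ k * numer N k : ℕ) : ℝ) := by push_cast; ring
        _ ≤ N := by exact_mod_cast hnum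
    have hp2 : (0:ℝ) < 2^k := by positivity
    have hnk : (numer N k : ℝ) ≤ (N:ℝ) / 2^k := by
      rw [le_div_iff₀ hp2]
      exact hc3
    have : (1 - (1/2:ℝ)^k) * N ≤ (N:ℝ) - (numer N k : ℝ) := by
      have hNr := Npos hN
      have : (1/2:ℝ)^k * N = N / 2^k := by
        rw [div_pow, one_pow]
        field_simp
      nlinarith [hnk]
    calc (1 - (1/2:ℝ)^k) * N ≤ (N:ℝ) - (numer N k : ℝ) := this
      _ = ((N - numer N k : ℕ) : ℝ) := hc2
      _ ≤ _ := hc1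

end perN3
end GreedyEnergy
namespace GreedyEnergy


/-- 0-indexed: the paper's `ϑ_k`, `k ≥ 1`, is `ϑ (k-1)`. -/
theorem stmt11 (ϑ : ℕ → ℝ) (hϑ : ϑ ∈ Sset) :
    (1 / 2 ≤ ϑ 0 ∧ ϑ 0 ≤ 1) ∧
    (∑' k, ϑ k) = 1 ∧
    (∑' k, ϑ k * |Real.log (ϑ k)|) ≤ Real.log 4 ∧
    ∀ k : ℕ,
      (0 ≤ ϑ k ∧ ϑ k ≤ 1 / ((2 : ℝ) ^ (k + 1) - 1)) ∧
      (∑' j : ℕ, ϑ (k + 1 + j)) ≤ ϑ k ∧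
      1 - 1 / (2 : ℝ) ^ k ≤ ∑ j ∈ Finset.range (k + 1), ϑ j := by
  obtain ⟨Nm, hmono, hpos, hlim⟩ := hϑ
  have h0 : ∀ k, 0 ≤ ϑ k := fun k =>
    ge_of_tendsto' (hlim k) (fun m => eta_nonneg (Nm m) k)
  have hub : ∀ k, ϑ k ≤ 1 / ((2:ℝ)^(k+1) - 1) := fun k =>
    le_of_tendsto' (hlim k) (fun m => eta_le_bound (hpos m) k)
  have hhalf : 1/2 ≤ ϑ 0 :=
    ge_of_tendsto' (hlim 0) (fun m => eta_zero_ge_half (hpos m))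
  have hone : ϑ 0 ≤ 1 :=
    le_of_tendsto' (hlim 0) (fun m => eta_le_one (hpos m) 0)
  have hpartial : ∀ K, Tendsto (fun m => ∑ j ∈ Finset.range K, eta (Nm m) j)
      atTop (𝓝 (∑ j ∈ Finset.range K, ϑ j)) := fun K =>
    tendsto_finset_sum _ (fun j _ => hlim j)
  have hPle : ∀ K, ∑ j ∈ Finset.range K, ϑ j ≤ 1 := fun K =>
    le_of_tendsto' (hpartial K) (fun m => sum_eta_le_one (hpos m) K)
  have hPge : ∀ k, 1 - (1/2:ℝ)^k ≤ ∑ j ∈ Finset.range (k+1), ϑ j := fun k =>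
    ge_of_tendsto' (hpartial (k+1)) (fun m => partial_lower (hpos m) k)
  -- summability
  have hgeomb : ∀ k : ℕ, 1 / ((2:ℝ)^(k+1) - 1) ≤ (1/2:ℝ)^k := by
    intro k
    have h1 : (0:ℝ) < 2^k := by positivity
    have h2 : (2:ℝ)^k ≤ (2:ℝ)^(k+1) - 1 := by
      have : (2:ℝ)^(k+1) = 2 * 2^k := by ring
      rw [this]
      have : (1:ℝ) ≤ 2^k := one_le_pow₀ one_le_two
      linarith
    have h3 : (1/2:ℝ)^k = 1 / 2^k := by
      rw [div_pow, one_pow]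
    rw [h3]
    exact one_div_le_one_div_of_le h1 h2
  have hsummable : Summable ϑ := by
    apply Summable.of_nonneg_of_le h0 (fun k => (hub k).trans (hgeomb k))
    exact summable_geometric_of_lt_one (by norm_num) (by norm_num)
  have htendP : Tendsto (fun K => ∑ j ∈ Finset.range K, ϑ j) atTop (𝓝 (∑' k, ϑ k)) :=
    hsummable.hasSum.tendsto_sum_nat
  have htsum_le : (∑' k, ϑ k) ≤ 1 :=
    le_of_tendsto htendP (Filter.Eventually.of_forall hPle)
  have htsum_ge : 1 ≤ (∑' k, ϑ k) := by
    have hlow : Tendsto (fun k : ℕ => 1 - (1/2:ℝ)^k) atTop (𝓝 1) := by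
      have := tendsto_pow_atTop_nhds_zero_of_lt_one (by norm_num : (0:ℝ) ≤ 1/2)
        (by norm_num : (1/2:ℝ) < 1)
      have h := tendsto_const_nhds (x := (1:ℝ)) (f := atTop (α := ℕ)) |>.sub this
      simpa using h
    have hshift : Tendsto (fun k : ℕ => ∑ j ∈ Finset.range (k+1), ϑ j) atTop (𝓝 (∑' k, ϑ k)) :=
      htendP.comp (tendsto_add_atTop_nat 1)
    exact le_of_tendsto_of_tendsto' hlow hshift hPge
  have htsum : (∑' k, ϑ k) = 1 := le_antisymm htsum_le htsum_ge
  -- tail bound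
  have htail : ∀ k, (∑' j : ℕ, ϑ (k + 1 + j)) ≤ ϑ k := by
    intro k
    have hsumt : Summable (fun j => ϑ (k + 1 + j)) := by
      have : (fun j => ϑ (k + 1 + j)) = fun j => ϑ (j + (k + 1)) := by
        funext j; congr 1; omega
      rw [this]
      exact (summable_nat_add_iff (k+1)).mpr hsummable
    have hpart_le : ∀ M, ∑ j ∈ Finset.range M, ϑ (k + 1 + j) ≤ ϑ k := by
      intro M
      have hlimM : Tendsto (fun m => ∑ j ∈ Finset.range M, eta (Nm m) (k + 1 + j))
          atTop (𝓝 (∑ j ∈ Finset.range M, ϑ (k + 1 + j))) :=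
        tendsto_finset_sum _ (fun j _ => hlim (k + 1 + j))
      apply le_of_tendsto_of_tendsto' hlimM (hlim k)
      intro m
      have hb := eta_tail_le (hpos m) k (k + 1 + M)
      have hre : ∑ i ∈ Finset.Ico (k+1) (k+1+M), eta (Nm m) i
          = ∑ j ∈ Finset.range M, eta (Nm m) (k + 1 + j) := by
        rw [Finset.sum_Ico_eq_sum_range]
        have : k + 1 + M - (k + 1) = M := by omega
        rw [this]
      rw [← hre]
      exact hb
    exact le_of_tendsto hsumt.hasSum.tendsto_sum_nat (Filter.Eventually.of_forall hpart_le)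
  -- entropy
  have habs : ∀ (x : ℝ), 0 ≤ x → x * |Real.log x| = |x * Real.log x| := by
    intro x hx
    rw [abs_mul, abs_of_nonneg hx]
  have htermlim : ∀ k, Tendsto (fun m => eta (Nm m) k * |Real.log (eta (Nm m) k)|)
      atTop (𝓝 (ϑ k * |Real.log (ϑ k)|)) := by
    intro k
    have h1 : Tendsto (fun m => eta (Nm m) k * Real.log (eta (Nm m) k))
        atTop (𝓝 (ϑ k * Real.log (ϑ k))) :=
      (Real.continuous_mul_log.tendsto _).comp (hlim k)
    have h2 := h1.abs
    have he : (fun m => |eta (Nm m) k * Real.log (eta (Nm m) k)|)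
        = fun m => eta (Nm m) k * |Real.log (eta (Nm m) k)| := by
      funext m; rw [habs _ (eta_nonneg _ _)]
    rw [he] at h2
    rw [habs _ (h0 k)]
    exact h2
  have hent_part : ∀ K, ∑ k ∈ Finset.range K, ϑ k * |Real.log (ϑ k)| ≤ Real.log 4 := by
    intro K
    have hl : Tendsto (fun m => ∑ k ∈ Finset.range K, eta (Nm m) k * |Real.log (eta (Nm m) k)|)
        atTop (𝓝 (∑ k ∈ Finset.range K, ϑ k * |Real.log (ϑ k)|)) :=
      tendsto_finset_sum _ (fun k _ => htermlim k)
    exact le_of_tendsto' hl (fun m => entropy_sum_le (hpos m) K)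
  have hent : (∑' k, ϑ k * |Real.log (ϑ k)|) ≤ Real.log 4 :=
    Real.tsum_le_of_sum_range_le (fun k => mul_nonneg (h0 k) (abs_nonneg _)) hent_part
  refine ⟨⟨hhalf, hone⟩, htsum, hent, fun k => ⟨⟨h0 k, hub k⟩, htail k, ?_⟩⟩
  have := hPge k
  have he : (1/2:ℝ)^k = 1 / (2:ℝ)^k := by rw [div_pow, one_pow]
  rwa [he] at this


end GreedyEnergy
end
end
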